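/- arXiv:math/0104111 — 6 statements merged into one kernel-verified Lean document; each statement's English description precedes it below -/
import Mathlib

section
/- Let S be a finite subset of Z^2, and suppose some walk on the slit plane with steps in S ends on the positive x-axis; let p be the smallest positive integer such that a walk on the slit plane ends at (p,0). Let B(x;t) in Q[x,x^{-1}][[t]] be the generating function for bilateral walks, and let log B(x;t) denote the series sum_{k>=1} (-1)^{k-1} (B(x;t)-1)^k / k, which is a well-defined element of Q[x,x^{-1}][[t]] because B(x;t)-1 is a multiple of t. Then the generating function S_{p,0}(t) in Q[[t]] for walks on the slit plane ending at (p,0) satisfies S_{p,0}(t) = [x^p] log B(x;t), the coefficient of x^p in log B(x;t). -/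
open scoped Classical
open PowerSeries

namespace SlitPlane

/-- A point (or step) of the lattice `ℤ²`. -/
abbrev Pt := ℤ × ℤ

/-- All steps of the walk `l` belong to `S`.  A walk is identified with its
list of steps; it starts at the origin. -/
def StepsIn (S : Finset Pt) (l : List Pt) : Prop := ∀ s ∈ l, s ∈ S

/-- The vertex `w_i` of the walk reached after `i` steps. -/
def vert (l : List Pt) (i : ℕ) : Pt := (l.take i).sum

/-- Membership in the half-line `H = {(k,0) : k ≤ 0}`. -/
def OnH (p : Pt) : Prop := p.2 = 0 ∧ p.1 ≤ 0

/-- Membership in the half-line `{(k,0) : k < 0}`. -/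
def OnNegAxis (p : Pt) : Prop := p.2 = 0 ∧ p.1 < 0

/-- A walk on the slit plane: none of the vertices `w_1, ..., w_n` lies on `H`. -/
def AvoidsH (l : List Pt) : Prop := ∀ i, 1 ≤ i → i ≤ l.length → ¬ OnH (vert l i)

/-- Number of walks of length `n` on the slit plane, with steps in `S`, ending at `e`. -/
noncomputable def slitCount (S : Finset Pt) (n : ℕ) (e : Pt) : ℕ :=
  Set.ncard {l : List Pt | l.length = n ∧ StepsIn S l ∧ AvoidsH l ∧ l.sum = e}

/-- Number of (unconstrained) walks of length `n` with steps in `S` ending at `e`. -/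
noncomputable def walkCount (S : Finset Pt) (n : ℕ) (e : Pt) : ℕ :=
  Set.ncard {l : List Pt | l.length = n ∧ StepsIn S l ∧ l.sum = e}

/-- Number of loops of length `n` with steps in `S`: walks ending at the origin,
none of whose vertices lies on `{(k,0) : k < 0}`. -/
noncomputable def loopCount (S : Finset Pt) (n : ℕ) : ℕ :=
  Set.ncard {l : List Pt | l.length = n ∧ StepsIn S l ∧
    (∀ i ≤ l.length, ¬ OnNegAxis (vert l i)) ∧ l.sum = (0, 0)}

end SlitPlane

namespace SlitPlane

/-- The Laurent polynomial ring `ℚ[x, x⁻¹]`: monomial `i` stands for `x^i`. -/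
abbrev L1 := AddMonoidAlgebra ℚ ℤ

/-- The series `log B = ∑_{k ≥ 1} (-1)^(k-1) (B-1)^k / k`, defined coefficientwise:
since `B - 1` is a multiple of `t`, only the terms with `k ≤ n` contribute to the
coefficient of `t^n`. -/
noncomputable def logSeries (B : PowerSeries L1) : PowerSeries L1 :=
  PowerSeries.mk fun n => ∑ k ∈ Finset.range (n + 1),
    if k = 0 then 0 else
      ((-1 : ℚ) ^ (k - 1) / k) • PowerSeries.coeff (R := L1) n ((B - 1) ^ k)

/-!
A bilateral walk factors uniquely into arches (nonempty walks that come back to the x-axis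
only at their last vertex), so `B = 1 / (1 - A)` for the arch series `A`, and
`log B = ∑_{k ≥ 1} A^k / k`. The coefficient of `x^p t^n` in `A^k` counts `k`-tuples of arches
of total length `n` and total horizontal displacement `p`. By the cycle lemma such a tuple has a
rotation whose partial displacements are all positive; by minimality of `p` this rotation is
unique, so the `k` rotations of a tuple are distinct and `[x^p] A^k / k` counts the tuples with
positive partial displacements. These are exactly the arch factorizations of the walks on the
slit plane ending at `(p, 0)`.
-/

section Walks

variable {S : Finset Pt}

lemma finite_walks (S : Finset Pt) (n : ℕ) :
    {l : List Pt | l.length = n ∧ StepsIn S l}.Finite := by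
  refine ((List.finite_length_eq S n).image (List.map Subtype.val)).subset ?_
  rintro l ⟨rfl, hl : ∀ s ∈ l, s ∈ S⟩
  exact ⟨l.pmap Subtype.mk hl, List.length_pmap, by simp [List.map_pmap]⟩

noncomputable def walksOfLength (S : Finset Pt) (n : ℕ) : Finset (List Pt) :=
  (finite_walks S n).toFinset

@[simp]
lemma mem_walksOfLength {n : ℕ} {l : List Pt} :
    l ∈ walksOfLength S n ↔ l.length = n ∧ StepsIn S l :=
  Set.Finite.mem_toFinset _

lemma ncard_walks_eq_card (S : Finset Pt) (n : ℕ) (P : List Pt → Prop) :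
    {l : List Pt | l.length = n ∧ StepsIn S l ∧ P l}.ncard =
      ((walksOfLength S n).filter P).card := by
  rw [← Set.ncard_coe_finset]
  congr 1
  ext l
  simp [and_assoc]

lemma stepsIn_flatten {L : List (List Pt)} : StepsIn S L.flatten ↔ ∀ a ∈ L, StepsIn S a := by
  simp only [StepsIn, List.mem_flatten]
  grind

end Walks

lemma vert_append_of_le_length {u v : List Pt} {i : ℕ} (h : i ≤ u.length) :
    vert (u ++ v) i = vert u i := by
  rw [vert, List.take_append_of_le_length h, vert]

lemma vert_append_length_add (u v : List Pt) (i : ℕ) :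
    vert (u ++ v) (u.length + i) = u.sum + vert v i := by
  rw [vert, List.take_append, List.take_of_length_le (Nat.le_add_right _ _),
    Nat.add_sub_cancel_left, List.sum_append, vert]

lemma vert_length (l : List Pt) : vert l l.length = l.sum := by
  rw [vert, List.take_length]

def AvoidsHFrom (q : Pt) (l : List Pt) : Prop :=
  ∀ i, 1 ≤ i → i ≤ l.length → ¬ OnH (q + vert l i)

lemma avoidsH_iff_avoidsHFrom_zero {l : List Pt} : AvoidsH l ↔ AvoidsHFrom 0 l := by
  simp only [AvoidsH, AvoidsHFrom, zero_add]

lemma avoidsHFrom_append {q : Pt} {u v : List Pt} :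
    AvoidsHFrom q (u ++ v) ↔ AvoidsHFrom q u ∧ AvoidsHFrom (q + u.sum) v := by
  constructor
  · intro h
    refine ⟨fun i h1 h2 => ?_, fun i h1 h2 => ?_⟩
    · simpa only [vert_append_of_le_length h2] using h i h1 (by simp; omega)
    · simpa only [vert_append_length_add, add_assoc] using
        h (u.length + i) (by omega) (by simp; omega)
  · rintro ⟨hu, hv⟩ i h1 h2
    rcases le_or_gt i u.length with h | h
    · rw [vert_append_of_le_length h]
      exact hu i h1 h
    · obtain ⟨j, rfl⟩ := Nat.exists_eq_add_of_lt h
      rw [add_assoc, vert_append_length_add, ← add_assoc]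
      exact hv _ (by omega) (by simp at h2; omega)

section Arches

structure IsArch (l : List Pt) : Prop where
  ne_nil : l ≠ []
  vert_snd_ne_zero : ∀ i, 1 ≤ i → i < l.length → (vert l i).2 ≠ 0
  sum_snd : l.sum.2 = 0

variable {a b : List Pt}

lemma IsArch.avoidsHFrom_iff (ha : IsArch a) {q : Pt} (hq : q.2 = 0) :
    AvoidsHFrom q a ↔ 0 < q.1 + a.sum.1 := by
  have hlen : 1 ≤ a.length := List.length_pos_iff.2 ha.ne_nil
  constructor
  · intro h
    have := h a.length hlen le_rfl
    simp only [vert_length, OnH, Prod.snd_add, hq, ha.sum_snd, Prod.fst_add] at this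
    omega
  · intro h i h1 h2
    rcases h2.lt_or_eq with hlt | rfl
    · exact fun hH => ha.vert_snd_ne_zero i h1 hlt (by simpa [hq] using hH.1)
    · simp only [vert_length, OnH, Prod.fst_add]
      omega

lemma IsArch.eq_of_isPrefix (ha : IsArch a) (hb : IsArch b) (h : a <+: b) : a = b := by
  by_contra hne
  have hlt : a.length < b.length := h.length_le.lt_of_ne fun e => hne (h.eq_of_length e)
  have hvert : vert b a.length = a.sum := by rw [vert, ← List.prefix_iff_eq_take.1 h]
  exact hb.vert_snd_ne_zero _ (List.length_pos_iff.2 ha.ne_nil) hlt (hvert ▸ ha.sum_snd)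

lemma IsArch.append_inj (ha : IsArch a) (hb : IsArch b) {u v : List Pt} (h : a ++ u = b ++ v) :
    a = b ∧ u = v := by
  have hab : a = b := by
    rcases le_total a.length b.length with hle | hle
    · exact ha.eq_of_isPrefix hb (List.prefix_of_prefix_length_le (h ▸ List.prefix_append a u)
        (List.prefix_append b v) hle)
    · exact (hb.eq_of_isPrefix ha (List.prefix_of_prefix_length_le (h ▸ List.prefix_append b v)
        (List.prefix_append a u) hle)).symm
  exact ⟨hab, List.append_cancel_left (hab ▸ h)⟩

end Arches

lemma exists_isArch_append {c : List Pt} (hc : c ≠ []) (hsum : c.sum.2 = 0) :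
    ∃ a b, IsArch a ∧ b.sum.2 = 0 ∧ c = a ++ b := by
  have hP : ∃ j, 1 ≤ j ∧ (vert c j).2 = 0 ∧ j ≤ c.length :=
    ⟨c.length, List.length_pos_iff.2 hc, by rwa [vert_length], le_rfl⟩
  obtain ⟨hj1, hj0, hjc⟩ := Nat.find_spec hP
  set j := Nat.find hP
  have hsplit := List.take_append_drop j c
  refine ⟨c.take j, c.drop j, ⟨?_, ?_, hj0⟩, ?_, hsplit.symm⟩
  · simpa [List.take_eq_nil_iff, hc] using Nat.one_le_iff_ne_zero.1 hj1
  · intro i hi1 hij h0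
    rw [List.length_take] at hij
    have hvert : vert (c.take j) i = vert c i := by
      rw [vert, vert, List.take_take, min_eq_left (by omega)]
    exact Nat.find_min hP (by omega : i < j) ⟨hi1, hvert ▸ h0, by omega⟩
  · have h := congrArg (fun l : List Pt => l.sum.2) hsplit
    simp only [List.sum_append, Prod.snd_add] at h
    rwa [show (c.take j).sum.2 = 0 from hj0, hsum, zero_add] at h

lemma exists_isArch_flatten_eq (c : List Pt) (hsum : c.sum.2 = 0) :
    ∃ L : List (List Pt), (∀ a ∈ L, IsArch a) ∧ L.flatten = c := by
  induction h : c.length using Nat.strong_induction_on generalizing c with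
  | _ n ih =>
    rcases eq_or_ne c [] with rfl | hc
    · exact ⟨[], by simp, rfl⟩
    obtain ⟨a, b, ha, hb, rfl⟩ := exists_isArch_append hc hsum
    have hlen : b.length < n := by
      have := List.length_pos_iff.2 ha.ne_nil
      rw [← h, List.length_append]
      omega
    obtain ⟨L, hL, rfl⟩ := ih _ hlen b hb rfl
    exact ⟨a :: L, by simpa [ha] using hL, rfl⟩

lemma eq_of_flatten_eq_of_isArch : ∀ {L M : List (List Pt)}, (∀ a ∈ L, IsArch a) →
    (∀ a ∈ M, IsArch a) → L.flatten = M.flatten → L = M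
  | [], [], _, _, _ => rfl
  | [], b :: _, _, hM, h => absurd (List.append_eq_nil_iff.1 h.symm).1 (hM b (by simp)).ne_nil
  | a :: _, [], hL, _, h => absurd (List.append_eq_nil_iff.1 h).1 (hL a (by simp)).ne_nil
  | a :: L, b :: M, hL, hM, h => by
    obtain ⟨rfl, h'⟩ := (hL a (by simp)).append_inj (hM b (by simp)) h
    rw [eq_of_flatten_eq_of_isArch (fun x hx => hL x (by simp [hx]))
      (fun x hx => hM x (by simp [hx])) h']

lemma length_le_length_flatten {L : List (List Pt)} (h : ∀ a ∈ L, a ≠ []) :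
    L.length ≤ L.flatten.length := by
  induction L with
  | nil => simp
  | cons a L ih =>
    have := List.length_pos_iff.2 (h a (by simp))
    have := ih fun b hb => h b (by simp [hb])
    simp only [List.flatten_cons, List.length_append, List.length_cons]
    omega

def PosPrefixSums (xs : List ℤ) : Prop :=
  ∀ j, 1 ≤ j → j ≤ xs.length → 0 < (xs.take j).sum

lemma PosPrefixSums.take {xs : List ℤ} (h : PosPrefixSums xs) (n : ℕ) :
    PosPrefixSums (xs.take n) := by
  intro j h1 h2
  rw [List.take_take]
  simp only [List.length_take] at h2
  exact h (min j n) (by omega) (by omega)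

def xDisplacements (L : List (List Pt)) : List ℤ := L.map fun a => a.sum.1

@[simp]
lemma xDisplacements_cons (a : List Pt) (L : List (List Pt)) :
    xDisplacements (a :: L) = a.sum.1 :: xDisplacements L := rfl

@[simp]
lemma length_xDisplacements (L : List (List Pt)) : (xDisplacements L).length = L.length :=
  List.length_map _

lemma xDisplacements_rotate (L : List (List Pt)) (r : ℕ) :
    xDisplacements (L.rotate r) = (xDisplacements L).rotate r :=
  List.map_rotate _ _ _

lemma sum_fst_flatten (L : List (List Pt)) : L.flatten.sum.1 = (xDisplacements L).sum := by
  induction L with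
  | nil => rfl
  | cons a L ih => rw [List.flatten_cons, List.sum_append, Prod.fst_add, ih]; rfl

lemma sum_snd_flatten {L : List (List Pt)} (h : ∀ a ∈ L, IsArch a) : L.flatten.sum.2 = 0 := by
  induction L with
  | nil => rfl
  | cons a L ih =>
    simp only [List.flatten_cons, List.sum_append, Prod.snd_add, (h a (by simp)).sum_snd,
      ih fun b hb => h b (by simp [hb]), add_zero]

lemma avoidsHFrom_flatten_iff {L : List (List Pt)} (hL : ∀ a ∈ L, IsArch a) {q : Pt}
    (hq : q.2 = 0) : AvoidsHFrom q L.flatten ↔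
      ∀ j, 1 ≤ j → j ≤ L.length → 0 < q.1 + ((xDisplacements L).take j).sum := by
  induction L generalizing q with
  | nil =>
    simp only [AvoidsHFrom, List.flatten_nil, List.length_nil]
    exact ⟨fun _ _ _ _ => by omega, fun _ _ _ _ => by omega⟩
  | cons a L ih =>
    have ha := hL a (by simp)
    rw [List.flatten_cons, avoidsHFrom_append, ha.avoidsHFrom_iff hq,
      ih (fun b hb => hL b (by simp [hb])) (by simp [hq, ha.sum_snd])]
    constructor
    · rintro ⟨h1, h2⟩ (_ | _ | j) hj1 hj2
      · omega
      · simpa using h1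
      · simpa [add_assoc] using h2 (j + 1) (by omega) (by simpa using hj2)
    · intro h
      refine ⟨by simpa using h 1 le_rfl (by simp), fun j hj1 hj2 => ?_⟩
      simpa [add_assoc] using h (j + 1) (by omega) (by simpa using hj2)

lemma avoidsH_flatten_iff {L : List (List Pt)} (hL : ∀ a ∈ L, IsArch a) :
    AvoidsH L.flatten ↔ PosPrefixSums (xDisplacements L) := by
  rw [avoidsH_iff_avoidsHFrom_zero, avoidsHFrom_flatten_iff hL rfl, PosPrefixSums,
    length_xDisplacements]
  simp

lemma sum_take_rotate_of_le {xs : List ℤ} {m j : ℕ} (hm : m ≤ xs.length)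
    (hj : j ≤ xs.length - m) :
    ((xs.rotate m).take j).sum = (xs.take (m + j)).sum - (xs.take m).sum := by
  rw [List.rotate_eq_drop_append_take hm,
    List.take_append_of_le_length (by rwa [List.length_drop]), List.take_add, List.sum_append]
  ring

lemma sum_take_rotate_length_sub_add {xs : List ℤ} {m i : ℕ} (hm : m ≤ xs.length) (hi : i ≤ m) :
    ((xs.rotate m).take (xs.length - m + i)).sum = xs.sum - (xs.take m).sum + (xs.take i).sum := by
  have hlen : (xs.drop m).length = xs.length - m := List.length_drop
  rw [List.rotate_eq_drop_append_take hm, ← hlen, List.take_append,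
    List.take_of_length_le (Nat.le_add_right _ _), Nat.add_sub_cancel_left, List.sum_append,
    List.take_take, min_eq_left hi, ← List.sum_take_add_sum_drop xs m]
  ring

/-- The cycle lemma: rotating to just after the last minimum of the prefix sums makes all
prefix sums positive. -/
lemma exists_rotate_posPrefixSums {xs : List ℤ} (h : 0 < xs.sum) :
    ∃ r < xs.length, PosPrefixSums (xs.rotate r) := by
  set k := xs.length
  set s : ℕ → ℤ := fun j => (xs.take j).sum
  obtain ⟨m₀, hm₀, hm₀_min⟩ := (Finset.range (k + 1)).exists_min_image s ⟨0, by simp⟩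
  set m := Nat.findGreatest (fun m => s m = s m₀) k
  have hmk : m ≤ k := Nat.findGreatest_le k
  have hsm : s m = s m₀ :=
    Nat.findGreatest_spec (P := fun m => s m = s m₀) (by simp at hm₀; omega) rfl
  have hle : ∀ j ≤ k, s m ≤ s j := fun j hj => hsm ▸ hm₀_min j (by simp; omega)
  have hgt : ∀ j, m < j → j ≤ k → s m < s j := fun j h1 h2 =>
    (hle j h2).lt_of_ne fun e => Nat.findGreatest_is_greatest h1 h2 (e.symm.trans hsm)
  have hs0 : s 0 = 0 := by simp [s]
  have hsk : s k = xs.sum := by simp [s, k]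
  have hmk' : m < k := hmk.lt_of_ne fun e => by
    have := hle 0 (Nat.zero_le _)
    rw [e] at this
    omega
  refine ⟨m, hmk', fun j h1 h2 => ?_⟩
  rw [List.length_rotate] at h2
  rcases le_or_gt j (k - m) with hj | hj
  · rw [sum_take_rotate_of_le hmk hj]
    have := hgt (m + j) (by omega) (by omega)
    simp only [s] at this
    omega
  · obtain ⟨i, rfl⟩ : ∃ i, j = k - m + i := ⟨j - (k - m), by omega⟩
    rw [sum_take_rotate_length_sub_add hmk (by omega)]
    have := hle i (by omega)
    simp only [s] at this
    omega

lemma sum_take_rotate_sub_lt_sum {xs : List ℤ} {r r' : ℕ} (hrr : r < r') (hr' : r' < xs.length)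
    (h : PosPrefixSums (xs.rotate r')) : ((xs.rotate r).take (r' - r)).sum < xs.sum := by
  have := h (xs.length - r' + r) (by omega) (by simp; omega)
  rw [sum_take_rotate_length_sub_add hr'.le hrr.le] at this
  rw [sum_take_rotate_of_le (by omega) (by omega), Nat.add_sub_cancel' hrr.le]
  linarith

/-- Between the starting points of two rotations with positive prefix sums, the arches would
form a walk on the slit plane ending at `(q, 0)` with `0 < q < p`. -/
lemma eq_of_posPrefixSums_rotate {S : Finset Pt} {p : ℤ}
    (hmin : ∀ q : ℤ, 0 < q → (∃ l : List Pt, StepsIn S l ∧ AvoidsH l ∧ l.sum = (q, 0)) → p ≤ q)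
    {L : List (List Pt)} (hL : ∀ a ∈ L, IsArch a ∧ StepsIn S a)
    (hsum : (xDisplacements L).sum = p) {r r' : ℕ} (hr : r < L.length) (hr' : r' < L.length)
    (hg : PosPrefixSums (xDisplacements (L.rotate r)))
    (hg' : PosPrefixSums (xDisplacements (L.rotate r'))) : r = r' := by
  wlog hlt : r < r' generalizing r r'
  · rcases (not_lt.1 hlt).lt_or_eq with h | h
    · exact (this hr' hr hg' hg h).symm
    · exact h.symm
  set M := (L.rotate r).take (r' - r)
  have hM : ∀ a ∈ M, IsArch a ∧ StepsIn S a := fun a ha =>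
    hL a ((L.rotate_perm r).mem_iff.1 (List.mem_of_mem_take ha))
  have hxM : xDisplacements M = (xDisplacements (L.rotate r)).take (r' - r) := List.map_take ..
  have hpos : 0 < (xDisplacements M).sum := by
    rw [hxM]
    exact hg _ (by omega) (by simp; omega)
  have hltp : (xDisplacements M).sum < p := by
    rw [hxM, xDisplacements_rotate, ← hsum]
    exact sum_take_rotate_sub_lt_sum hlt (by simpa using hr') (by rwa [← xDisplacements_rotate])
  have hslit : AvoidsH M.flatten :=
    (avoidsH_flatten_iff fun a ha => (hM a ha).1).2 (hxM ▸ hg.take _)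
  have hend : M.flatten.sum = ((xDisplacements M).sum, 0) :=
    Prod.ext (sum_fst_flatten M) (sum_snd_flatten fun a ha => (hM a ha).1)
  exact absurd (hmin _ hpos ⟨M.flatten, stepsIn_flatten.2 fun a ha => (hM a ha).2, hslit, hend⟩)
    (not_le.2 hltp)

section CountingPoly

variable {α β : Type*}

noncomputable def countingPoly (W : Finset α) (w : α → ℤ) : L1 :=
  ∑ a ∈ W, AddMonoidAlgebra.single (w a) 1

lemma coeff_countingPoly (W : Finset α) (w : α → ℤ) (i : ℤ) :
    (countingPoly W w).coeff i = ((W.filter fun a => w a = i).card : ℚ) := by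
  rw [countingPoly, AddMonoidAlgebra.coeff_sum, Finsupp.finsetSum_apply, Finset.card_filter]
  push_cast
  refine Finset.sum_congr rfl fun a _ => ?_
  rw [AddMonoidAlgebra.coeff_single, Finsupp.single_apply]

lemma countingPoly_mul (W : Finset α) (V : Finset β) (w : α → ℤ) (v : β → ℤ) :
    countingPoly W w * countingPoly V v = countingPoly (W ×ˢ V) fun x => w x.1 + v x.2 := by
  simp only [countingPoly, Finset.sum_mul_sum, Finset.sum_product,
    AddMonoidAlgebra.single_mul_single, one_mul]

lemma countingPoly_image [DecidableEq β] {W : Finset α} {f : α → β} (hf : Set.InjOn f W)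
    (w : β → ℤ) :
    countingPoly (W.image f) w = countingPoly W (w ∘ f) :=
  Finset.sum_image hf

lemma countingPoly_sigma {σ : α → Type*} (s : Finset α) (t : ∀ a, Finset (σ a))
    (w : Sigma σ → ℤ) :
    countingPoly (s.sigma t) w = ∑ a ∈ s, countingPoly (t a) fun x => w ⟨a, x⟩ :=
  Finset.sum_sigma _ _ _

end CountingPoly

section ArchTuples

variable {S : Finset Pt}

noncomputable def arches (S : Finset Pt) (n : ℕ) : Finset (List Pt) :=
  (walksOfLength S n).filter IsArch

noncomputable def archGF (S : Finset Pt) : PowerSeries L1 :=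
  PowerSeries.mk fun n => countingPoly (arches S n) fun a => a.sum.1

noncomputable def archTuples (S : Finset Pt) : ℕ → ℕ → Finset (List (List Pt))
  | 0, n => if n = 0 then {[]} else ∅
  | k + 1, n =>
    ((Finset.HasAntidiagonal.antidiagonal n).sigma
      fun m => arches S m.1 ×ˢ archTuples S k m.2).image fun x => x.2.1 :: x.2.2

lemma mem_archTuples {k n : ℕ} {L : List (List Pt)} :
    L ∈ archTuples S k n ↔
      L.length = k ∧ (∀ a ∈ L, IsArch a ∧ StepsIn S a) ∧ L.flatten.length = n := by
  induction k generalizing n L with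
  | zero =>
    rw [archTuples]
    split_ifs with hn <;> cases L <;> simp [hn, eq_comm]
  | succ k ih =>
    cases L with
    | nil => simp [archTuples]
    | cons a T =>
      simp only [archTuples, Finset.mem_image, Finset.mem_sigma,
        Finset.HasAntidiagonal.mem_antidiagonal, Finset.mem_product, arches, Finset.mem_filter,
        mem_walksOfLength, ih, Sigma.exists, Prod.exists, List.cons.injEq, List.length_cons,
        List.forall_mem_cons, List.flatten_cons, List.length_append]
      constructor
      · rintro ⟨m₁, m₂, a, T, ⟨hm, ⟨⟨rfl, hst⟩, harch⟩, rfl, hTT, rfl⟩, rfl, rfl⟩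
        exact ⟨rfl, ⟨⟨harch, hst⟩, hTT⟩, hm⟩
      · rintro ⟨hk, ⟨⟨harch, hst⟩, hTT⟩, hn⟩
        exact ⟨_, _, a, T, ⟨hn, ⟨⟨rfl, hst⟩, harch⟩, by omega, hTT, rfl⟩, rfl, rfl⟩

lemma coeff_archGF_pow (k n : ℕ) :
    coeff n (archGF S ^ k) =
      countingPoly (archTuples S k n) fun L => (xDisplacements L).sum := by
  induction k generalizing n with
  | zero =>
    rw [pow_zero, coeff_one, archTuples]
    split_ifs
    · rw [countingPoly, Finset.sum_singleton]
      rfl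
    · rfl
  | succ k ih =>
    have hinj : Set.InjOn (fun x : (_ : ℕ × ℕ) × List Pt × List (List Pt) => x.2.1 :: x.2.2)
        ((Finset.HasAntidiagonal.antidiagonal n).sigma
          fun m => arches S m.1 ×ˢ archTuples S k m.2) := by
      rintro ⟨⟨m₁, m₂⟩, a, T⟩ hx ⟨⟨m₁', m₂'⟩, a', T'⟩ hx' h
      obtain ⟨rfl, rfl⟩ := List.cons.inj h
      simp only [Finset.coe_sigma, Set.mem_sigma_iff, Finset.mem_coe, Finset.mem_product,
        arches, Finset.mem_filter, mem_walksOfLength, mem_archTuples] at hx hx'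
      obtain ⟨-, ⟨⟨rfl, -⟩, -⟩, -, -, rfl⟩ := hx
      obtain ⟨-, ⟨⟨rfl, -⟩, -⟩, -, -, rfl⟩ := hx'
      rfl
    rw [pow_succ', coeff_mul, archTuples, countingPoly_image hinj, countingPoly_sigma]
    refine Finset.sum_congr rfl fun m _ => ?_
    rw [ih, archGF, coeff_mk, countingPoly_mul]
    rfl

end ArchTuples

section Counting

variable {S : Finset Pt}

noncomputable def bilateralWalks (S : Finset Pt) (n : ℕ) : Finset (List Pt) :=
  (walksOfLength S n).filter fun l => l.sum.2 = 0

lemma walkCount_eq_card (S : Finset Pt) (n : ℕ) (i : ℤ) :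
    walkCount S n (i, 0) = ((bilateralWalks S n).filter fun l => l.sum.1 = i).card := by
  rw [walkCount, ncard_walks_eq_card, bilateralWalks, Finset.filter_filter]
  simp only [Prod.ext_iff, and_comm]

lemma slitCount_eq_card (S : Finset Pt) (n : ℕ) (p : ℤ) :
    slitCount S n (p, 0) =
      ((bilateralWalks S n).filter fun l => AvoidsH l ∧ l.sum.1 = p).card := by
  rw [slitCount, ncard_walks_eq_card, bilateralWalks, Finset.filter_filter]
  simp only [Prod.ext_iff]
  congr 1
  exact Finset.filter_congr fun _ _ => by tauto

/-- Arches have positive length, so a tuple of arches of total length `n` has at most `n`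
entries. -/
noncomputable def archFactorizations (S : Finset Pt) (n : ℕ) :
    Finset ((_ : ℕ) × List (List Pt)) :=
  (Finset.range (n + 1)).sigma fun k => archTuples S k n

lemma flatten_injOn_archFactorizations {n : ℕ} :
    Set.InjOn (fun x => x.2.flatten) (archFactorizations S n : Set ((_ : ℕ) × List (List Pt))) := by
  rintro ⟨k, L⟩ hx ⟨k', L'⟩ hx' h
  simp only [archFactorizations, Finset.coe_sigma, Set.mem_sigma_iff, Finset.mem_coe,
    mem_archTuples] at hx hx'
  obtain ⟨-, rfl, hL, -⟩ := hx
  obtain ⟨-, rfl, hL', -⟩ := hx'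
  obtain rfl := eq_of_flatten_eq_of_isArch (fun a ha => (hL a ha).1) (fun a ha => (hL' a ha).1) h
  rfl

lemma image_flatten_archFactorizations (n : ℕ) :
    (archFactorizations S n).image (fun x => x.2.flatten) = bilateralWalks S n := by
  ext c
  simp only [archFactorizations, bilateralWalks, Finset.mem_image, Finset.mem_sigma,
    Finset.mem_range, mem_archTuples, Finset.mem_filter, mem_walksOfLength, Sigma.exists]
  constructor
  · rintro ⟨k, L, ⟨-, -, hL, rfl⟩, rfl⟩
    exact ⟨⟨rfl, stepsIn_flatten.2 fun a ha => (hL a ha).2⟩,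
      sum_snd_flatten fun a ha => (hL a ha).1⟩
  · rintro ⟨⟨rfl, hc⟩, hsum⟩
    obtain ⟨L, hL, rfl⟩ := exists_isArch_flatten_eq c hsum
    have := length_le_length_flatten fun a ha => (hL a ha).ne_nil
    exact ⟨L.length, L, ⟨by omega, rfl, fun a ha => ⟨hL a ha, stepsIn_flatten.1 hc a ha⟩, rfl⟩, rfl⟩

lemma coeff_eq_sum_coeff_archGF_pow {B : PowerSeries L1}
    (hB : ∀ (n : ℕ) (i : ℤ), (coeff n B).coeff i = (walkCount S n (i, 0) : ℚ)) (n : ℕ) :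
    coeff n B = ∑ k ∈ Finset.range (n + 1), coeff n (archGF S ^ k) := by
  have hB' : coeff n B = countingPoly (bilateralWalks S n) fun l => l.sum.1 := by
    ext i
    rw [hB, coeff_countingPoly, walkCount_eq_card]
  rw [hB', ← image_flatten_archFactorizations, countingPoly_image flatten_injOn_archFactorizations,
    archFactorizations, countingPoly_sigma]
  simp only [coeff_archGF_pow, Function.comp_def, sum_fst_flatten]

lemma slitCount_eq_sum_card (S : Finset Pt) (n : ℕ) (p : ℤ) :
    slitCount S n (p, 0) = ∑ k ∈ Finset.range (n + 1), ((archTuples S k n).filter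
      fun L => (xDisplacements L).sum = p ∧ PosPrefixSums (xDisplacements L)).card := by
  rw [slitCount_eq_card, Finset.card_filter, ← image_flatten_archFactorizations,
    Finset.sum_image flatten_injOn_archFactorizations, archFactorizations, Finset.sum_sigma]
  refine Finset.sum_congr rfl fun k _ => ?_
  rw [Finset.card_filter]
  refine Finset.sum_congr rfl fun L hL => ?_
  have hL := fun a ha => ((mem_archTuples.1 hL).2.1 a ha).1
  simp only [avoidsH_flatten_iff hL, sum_fst_flatten, and_comm]

end Counting

section Rotations

variable {S : Finset Pt}

lemma rotate_mem_archTuples {k n : ℕ} {L : List (List Pt)} (hL : L ∈ archTuples S k n) (r : ℕ) :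
    L.rotate r ∈ archTuples S k n := by
  obtain ⟨hk, harch, hn⟩ := mem_archTuples.1 hL
  refine mem_archTuples.2 ⟨by rw [List.length_rotate, hk], fun a ha =>
    harch a ((L.rotate_perm r).mem_iff.1 ha), ?_⟩
  rw [← hn, List.length_flatten, List.length_flatten]
  exact ((L.rotate_perm r).map _).sum_eq

lemma sum_xDisplacements_rotate (L : List (List Pt)) (r : ℕ) :
    (xDisplacements (L.rotate r)).sum = (xDisplacements L).sum := by
  rw [xDisplacements_rotate]
  exact ((xDisplacements L).rotate_perm r).sum_eq

lemma rotate_rotate_length_sub {α : Type*} (l : List α) {r : ℕ} (hr : r < l.length) :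
    (l.rotate r).rotate ((l.length - r) % l.length) = l := by
  rw [List.rotate_rotate, ← List.rotate_mod, Nat.add_mod_mod, Nat.add_sub_cancel' hr.le,
    Nat.mod_self, List.rotate_zero]

/-- Each tuple of arches with total displacement `p` is, in exactly one way, a rotation of a
tuple whose partial displacements are all positive. -/
lemma card_filter_sum_eq_mul_card {p : ℤ} (hp : 0 < p)
    (hmin : ∀ q : ℤ, 0 < q → (∃ l : List Pt, StepsIn S l ∧ AvoidsH l ∧ l.sum = (q, 0)) → p ≤ q)
    (k n : ℕ) :
    ((archTuples S k n).filter fun L => (xDisplacements L).sum = p).card =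
      k * ((archTuples S k n).filter
        fun L => (xDisplacements L).sum = p ∧ PosPrefixSums (xDisplacements L)).card := by
  set all := (archTuples S k n).filter fun L => (xDisplacements L).sum = p
  set good := (archTuples S k n).filter
    fun L => (xDisplacements L).sum = p ∧ PosPrefixSums (xDisplacements L)
  rw [← Finset.card_range k, ← Finset.card_product]
  symm
  refine Finset.card_bij (fun x _ => x.2.rotate x.1) ?_ ?_ ?_
  · rintro ⟨r, L⟩ hx
    simp only [all, good, Finset.mem_product, Finset.mem_range, Finset.mem_filter] at hx ⊢
    exact ⟨rotate_mem_archTuples hx.2.1 r, by rw [sum_xDisplacements_rotate, hx.2.2.1]⟩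
  · rintro ⟨r, L⟩ hx ⟨r', L'⟩ hx' h
    simp only [good, Finset.mem_product, Finset.mem_range, Finset.mem_filter] at hx hx' h
    obtain ⟨hr, hL, hsum, hg⟩ := hx
    obtain ⟨hr', hL', -, hg'⟩ := hx'
    obtain ⟨hk, harch, -⟩ := mem_archTuples.1 hL
    have hk' : L'.length = k := (mem_archTuples.1 hL').1
    have hL'L : L' = L.rotate ((r + (k - r')) % k) := by
      calc L' = (L'.rotate r').rotate (k - r') := by
            rw [List.rotate_rotate, Nat.add_sub_cancel' hr'.le, ← hk', List.rotate_length]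
        _ = L.rotate ((r + (k - r')) % k) := by rw [← h, List.rotate_rotate, ← hk, List.rotate_mod]
    have h0 : 0 = (r + (k - r')) % k :=
      eq_of_posPrefixSums_rotate hmin harch hsum (by omega) (hk ▸ Nat.mod_lt _ (by omega))
        (by rwa [List.rotate_zero]) (hL'L ▸ hg')
    obtain rfl : r = r' := by
      rcases le_or_gt r' r with hle | hlt
      · rw [show r + (k - r') = r - r' + k by omega, Nat.add_mod_right,
          Nat.mod_eq_of_lt (by omega)] at h0
        omega
      · rw [Nat.mod_eq_of_lt (by omega)] at h0
        omega
    simp only [Prod.mk.injEq, true_and]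
    exact List.rotate_eq_rotate.1 h
  · intro T hT
    simp only [all, Finset.mem_filter] at hT
    obtain ⟨hT, hsum⟩ := hT
    have hk : T.length = k := (mem_archTuples.1 hT).1
    obtain ⟨r, hr, hg⟩ := exists_rotate_posPrefixSums (xs := xDisplacements T) (hsum ▸ hp)
    rw [length_xDisplacements, hk] at hr
    refine ⟨((k - r) % k, T.rotate r), ?_, hk ▸ rotate_rotate_length_sub T (hk ▸ hr)⟩
    simp only [good, Finset.mem_product, Finset.mem_range, Finset.mem_filter]
    exact ⟨Nat.mod_lt _ (by omega), rotate_mem_archTuples hT r,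
      by rw [sum_xDisplacements_rotate, hsum], by rwa [xDisplacements_rotate]⟩

end Rotations

section Logarithm

variable {R : Type*} [CommRing R]

lemma one_sub_mul_eq_one_of_coeff_eq_sum {A B : R⟦X⟧} (hA : constantCoeff A = 0)
    (hB : ∀ n, coeff n B = ∑ k ∈ Finset.range (n + 1), coeff n (A ^ k)) : (1 - A) * B = 1 := by
  ext m
  have hAk : ∀ j k, j < k → coeff j (A ^ k) = 0 := fun j k hjk =>
    X_pow_dvd_iff.1 (pow_dvd_pow_of_dvd (X_dvd_iff.2 hA) k) j hjk
  have hBgeom : ∀ j ≤ m, coeff j B = coeff j (∑ k ∈ Finset.range (m + 1), A ^ k) := fun j hj => by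
    rw [hB, map_sum]
    exact Finset.sum_subset (Finset.range_subset_range.2 (by omega))
      fun k _ hk => hAk j k (by simpa using hk)
  calc coeff m ((1 - A) * B) = coeff m ((1 - A) * ∑ k ∈ Finset.range (m + 1), A ^ k) := by
        simp only [coeff_mul]
        exact Finset.sum_congr rfl fun x hx => by
          rw [hBgeom x.2 (Finset.HasAntidiagonal.antidiagonal.snd_le hx)]
    _ = coeff m 1 := by rw [mul_neg_geom_sum, map_sub, hAk m (m + 1) (by omega), sub_zero]

variable [Algebra ℚ R]

/-- The truncation at order `n` of `-log (1 - G) = ∑_{k ≥ 1} G^k / k`; the term `k = 0`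
vanishes because `(0 : ℚ)⁻¹ = 0`. -/
noncomputable def negLogOneSubTrunc (G : R⟦X⟧) (n : ℕ) : R⟦X⟧ :=
  ∑ k ∈ Finset.range (n + 1), (k : ℚ)⁻¹ • G ^ k

lemma derivative_negLogOneSubTrunc (G : R⟦X⟧) (n : ℕ) :
    d⁄dX R (negLogOneSubTrunc G n) = (∑ j ∈ Finset.range n, G ^ j) * d⁄dX R G := by
  rw [negLogOneSubTrunc, map_sum (d⁄dX R), Finset.sum_range_succ', Finset.sum_mul]
  simp only [map_rat_smul, Derivation.leibniz_pow, Nat.cast_zero, inv_zero, zero_smul,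
    add_tsub_cancel_right, smul_eq_mul, map_zero, add_zero]
  refine Finset.sum_congr rfl fun j _ => ?_
  rw [← Nat.cast_smul_eq_nsmul ℚ, smul_smul, inv_mul_cancel₀ (by positivity), one_smul]

lemma coeff_eq_zero_of_X_pow_dvd_derivative {f : R⟦X⟧} {n : ℕ}
    (h : X ^ (n + 1) ∣ d⁄dX R f) : coeff (n + 1) f = 0 := by
  have h' := X_pow_dvd_iff.1 h n n.lt_succ_self
  rw [coeff_derivative] at h'
  have hunit : IsUnit ((n : R) + 1) := by
    simpa using (Ne.isUnit (by positivity : (n : ℚ) + 1 ≠ 0)).map (algebraMap ℚ R)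
  exact hunit.mul_left_eq_zero.1 h'

/-- `-log (1 - A) - log (1 - G) = -log ((1 - A) (1 - G)) = 0`, checked on the derivative:
it is `A^n (1 - G) A' + G^n (1 - A) G'` up to sign, hence divisible by `X^n`. -/
lemma coeff_negLogOneSubTrunc_add_eq_zero {A G : R⟦X⟧} (hA : constantCoeff A = 0)
    (h : (1 - A) * (1 - G) = 1) (n : ℕ) :
    coeff n (negLogOneSubTrunc A n + negLogOneSubTrunc G n) = 0 := by
  have hG : constantCoeff G = 0 := by simpa [hA] using congrArg constantCoeff h
  rcases n with _ | m
  · simp [negLogOneSubTrunc]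
  set D := d⁄dX R
  have hD : (1 - G) * D A + (1 - A) * D G = 0 := by
    have := congrArg D h
    simp only [Derivation.leibniz, map_sub, Derivation.map_one_eq_zero, smul_eq_mul] at this
    linear_combination -this
  have hderiv : D (negLogOneSubTrunc A (m + 1) + negLogOneSubTrunc G (m + 1)) =
      -(A ^ (m + 1) * ((1 - G) * D A) + G ^ (m + 1) * ((1 - A) * D G)) := by
    rw [map_add, derivative_negLogOneSubTrunc, derivative_negLogOneSubTrunc]
    linear_combination ((1 - G) * D A) * geom_sum_mul_neg A (m + 1) +
      ((1 - A) * D G) * geom_sum_mul_neg G (m + 1) -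
      ((∑ j ∈ Finset.range (m + 1), A ^ j) * D A + (∑ j ∈ Finset.range (m + 1), G ^ j) * D G) * h
      + hD
  refine coeff_eq_zero_of_X_pow_dvd_derivative (hderiv ▸ (Dvd.dvd.add ?_ ?_).neg_right)
  · exact (pow_dvd_pow_of_dvd (X_dvd_iff.2 hA) _).mul_right _
  · exact (pow_dvd_pow_of_dvd (X_dvd_iff.2 hG) _).mul_right _

lemma coeff_logSeries (B : PowerSeries L1) (n : ℕ) :
    coeff n (logSeries B) = -coeff n (negLogOneSubTrunc (1 - B) n) := by
  rw [logSeries, coeff_mk, negLogOneSubTrunc, map_sum, ← Finset.sum_neg_distrib]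
  refine Finset.sum_congr rfl fun k _ => ?_
  split_ifs with hk
  · simp [hk]
  have hpow : (B - 1) ^ k = ((-1 : ℚ) ^ k) • (1 - B) ^ k := by
    rw [← smul_pow, neg_one_smul, neg_sub]
  rw [hpow, coeff_smul, coeff_smul, smul_smul, ← neg_smul]
  congr 1
  obtain ⟨j, rfl⟩ := Nat.exists_eq_add_one_of_ne_zero hk
  rw [Nat.add_sub_cancel]
  field_simp
  rw [pow_succ, ← mul_assoc, ← mul_pow]
  norm_num

end Logarithm

lemma constantCoeff_archGF (S : Finset Pt) : constantCoeff (archGF S) = 0 := by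
  rw [← coeff_zero_eq_constantCoeff_apply, archGF, coeff_mk, countingPoly]
  refine Finset.sum_eq_zero fun a ha => ?_
  simp only [arches, Finset.mem_filter, mem_walksOfLength, List.length_eq_zero_iff] at ha
  exact absurd ha.1.1 ha.2.ne_nil

lemma coeff_coeff_negLogOneSubTrunc_archGF {S : Finset Pt} {p : ℤ} (hp : 0 < p)
    (hmin : ∀ q : ℤ, 0 < q → (∃ l : List Pt, StepsIn S l ∧ AvoidsH l ∧ l.sum = (q, 0)) → p ≤ q)
    (n : ℕ) : (coeff n (negLogOneSubTrunc (archGF S) n)).coeff p = slitCount S n (p, 0) := by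
  rw [slitCount_eq_sum_card, negLogOneSubTrunc, map_sum, AddMonoidAlgebra.coeff_sum,
    Finsupp.finsetSum_apply]
  push_cast
  refine Finset.sum_congr rfl fun k _ => ?_
  rw [coeff_smul, coeff_archGF_pow, AddMonoidAlgebra.coeff_smul, Finsupp.smul_apply,
    coeff_countingPoly, card_filter_sum_eq_mul_card hp hmin, smul_eq_mul]
  rcases eq_or_ne k 0 with rfl | hk
  · rw [Nat.cast_zero, inv_zero, zero_mul, eq_comm, Nat.cast_eq_zero, Finset.card_eq_zero,
      Finset.filter_eq_empty_iff]
    rintro L hL ⟨hsum, -⟩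
    rw [List.length_eq_zero_iff.1 (mem_archTuples.1 hL).1] at hsum
    exact hp.ne hsum
  · push_cast
    field_simp

theorem statement2_general (S : Finset Pt) (p : ℤ) (hp : 0 < p)
    (hmin : ∀ q : ℤ, 0 < q →
      (∃ l : List Pt, StepsIn S l ∧ AvoidsH l ∧ l.sum = (q, 0)) → p ≤ q)
    (B : PowerSeries L1)
    (hB : ∀ (n : ℕ) (i : ℤ),
      (PowerSeries.coeff (R := L1) n B).coeff i = (walkCount S n (i, 0) : ℚ))
    (Sp : PowerSeries ℚ)
    (hSp : ∀ n : ℕ, PowerSeries.coeff (R := ℚ) n Sp = (slitCount S n (p, 0) : ℚ)) :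
    Sp = PowerSeries.mk fun n => (PowerSeries.coeff (R := L1) n (logSeries B)).coeff p := by
  have hA := constantCoeff_archGF S
  have hAB : (1 - archGF S) * (1 - (1 - B)) = 1 := by
    rw [sub_sub_cancel]
    exact one_sub_mul_eq_one_of_coeff_eq_sum hA (coeff_eq_sum_coeff_archGF_pow hB)
  have hlog := coeff_negLogOneSubTrunc_add_eq_zero hA hAB
  ext n
  rw [hSp, coeff_mk, coeff_logSeries, neg_eq_of_add_eq_zero_left ((map_add ..).symm.trans (hlog n)),
    coeff_coeff_negLogOneSubTrunc_archGF hp hmin]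

/-- if `p` is the smallest positive integer such that some walk on the
slit plane with steps in `S` ends at `(p,0)`, then the generating function of walks on
the slit plane ending at `(p,0)` is the coefficient of `x^p` in `log B(x;t)`, where
`B` is the generating function of bilateral walks. -/
theorem statement2 (S : Finset Pt) (p : ℤ) (hp : 0 < p)
    (hex : ∃ l : List Pt, StepsIn S l ∧ AvoidsH l ∧ l.sum = (p, 0))
    (hmin : ∀ q : ℤ, 0 < q →
      (∃ l : List Pt, StepsIn S l ∧ AvoidsH l ∧ l.sum = (q, 0)) → p ≤ q)
    (B : PowerSeries L1)
    (hB : ∀ (n : ℕ) (i : ℤ),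
      (PowerSeries.coeff (R := L1) n B).coeff i = (walkCount S n (i, 0) : ℚ))
    (Sp : PowerSeries ℚ)
    (hSp : ∀ n : ℕ, PowerSeries.coeff (R := ℚ) n Sp = (slitCount S n (p, 0) : ℚ)) :
    Sp = PowerSeries.mk fun n => (PowerSeries.coeff (R := L1) n (logSeries B)).coeff p :=
  statement2_general S p hp hmin B hB Sp hSp

end SlitPlane
end

section
/- Let P be a finite set of steps in Z, let R be a commutative ring, and let lambda : P -> R assign a weight to each step; the weight of a walk is the product of the weights of its steps. Suppose some walk with steps in P starting at 0 ends at a positive integer, and let p be the smallest positive integer such that some walk ends at p. Then for every n >= 1, n times the total weight of the n-step walks that start at 0, end at p, and have s_i > 0 for all 1 <= i <= n, equals the coefficient of x^p in the Laurent polynomial (sum_{i in P} lambda_i x^i)^n in R[x,x^{-1}]. -/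
/-!
Expanding the power, the coefficient of `x^p` is the total weight of all `n`-step walks ending
at `p`. The `n` cyclic rotations of a step sequence have the same weight and endpoint, and
exactly one of them stays positive (cycle lemma): extended periodically, the partial sums
satisfy `T (n + k) = T k + p`, so rotating to start at the last minimiser of `T` on `[0, n)`
works, while two good starting points `a < b` would give a segment `[a, b)` of positive sum
less than `p`, which the minimality of `p` forbids. Counting pairs (walk, rotation) gives
the factor `n`.
-/

open scoped Classical

namespace SlitPlane

open Finset

/-- Total weight of the `n`-step walks on `ℤ` with steps in `P`, starting at `0`,
staying positive after the start (`s_k > 0` for `1 ≤ k ≤ n`), and ending at `p`.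
A walk is encoded by its sequence of steps `f : Fin n → P`; its weight is the
product of the weights of its steps, and the partial sum after `k` steps is
`∑_{i < k} f i`. -/
noncomputable def posWalkWeight (R : Type*) [CommRing R] (P : Finset ℤ)
    (lam : ℤ → R) (n : ℕ) (p : ℤ) : R :=
  ∑ f : Fin n → P,
    if (∀ k : ℕ, 1 ≤ k → k ≤ n →
          0 < ∑ i ∈ Finset.univ.filter (fun i : Fin n => (i : ℕ) < k), ((f i : ℤ)))
        ∧ (∑ i : Fin n, ((f i : ℤ))) = p
    then ∏ i : Fin n, lam (f i) else 0

theorem coeff_pow_sum_single {R G : Type*} [CommSemiring R] [AddCommMonoid G] [DecidableEq G]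
    (P : Finset G) (lam : G → R) (n : ℕ) (g : G) :
    ((∑ i ∈ P, AddMonoidAlgebra.single i (lam i) : AddMonoidAlgebra R G) ^ n).coeff g
      = ∑ f : Fin n → P, if ∑ i, (f i : G) = g then ∏ i, lam (f i) else 0 := by
  rw [← sum_coe_sort, Fintype.sum_pow, AddMonoidAlgebra.coeff_sum, sum_apply']
  simp only [AddMonoidAlgebra.prod_single, AddMonoidAlgebra.coeff_single, Finsupp.single_apply]

theorem exists_list_sum_eq_sum {ι M : Type*} [AddCommMonoid M] {P : Set M} (s : Finset ι)
    {g : ι → M} (hg : ∀ i, g i ∈ P) : ∃ l : List M, (∀ x ∈ l, x ∈ P) ∧ l.sum = ∑ i ∈ s, g i :=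
  ⟨s.toList.map g, by simpa using fun i _ => hg i, sum_map_toList s g⟩

theorem sum_ite_and_of_existsUnique {ι M : Type*} [Fintype ι] [AddCommMonoid M] {Q : ι → Prop}
    [DecidablePred Q] {C : Prop} [Decidable C] (h : C → ∃! j, Q j) (w : M) :
    ∑ j, (if Q j ∧ C then w else 0) = if C then w else 0 := by
  by_cases hC : C
  · obtain ⟨j₀, hj₀, huniq⟩ := h hC
    simp only [hC, and_true, if_true]
    rw [sum_eq_single j₀ (fun j _ hj => if_neg fun hQ => hj (huniq j hQ)) (by simp), if_pos hj₀]
  · simp [hC]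

section CyclicPartialSum

open Fin.NatCast

variable {M : Type*} {n : ℕ} [NeZero n]

/-- Partial sums of the `n`-periodic extension of `c` to `ℕ`: the cast `ℕ → Fin n` reduces
mod `n`. -/
def cyclicPartialSum [AddCommMonoid M] (c : Fin n → M) (m : ℕ) : M :=
  ∑ i ∈ range m, c (i : Fin n)

theorem cyclicPartialSum_period_add [AddCommMonoid M] (c : Fin n → M) (k : ℕ) :
    cyclicPartialSum c (n + k) = cyclicPartialSum c k + ∑ i, c i := by
  rw [cyclicPartialSum, sum_range_add, add_comm, ← Fin.sum_univ_eq_sum_range (fun i => c i)]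
  simp only [Nat.cast_add, Fin.natCast_self, zero_add, Fin.cast_val_eq_self, cyclicPartialSum]

theorem cyclicPartialSum_sub [AddCommGroup M] (c : Fin n → M) {a b : ℕ} (hab : a ≤ b) :
    cyclicPartialSum c b - cyclicPartialSum c a = ∑ i ∈ Ico a b, c (i : Fin n) :=
  (sum_Ico_eq_sub _ hab).symm

theorem sum_filter_lt_rotate [AddCommGroup M] (c : Fin n → M) (j : Fin n) {k : ℕ} (hk : k ≤ n) :
    ∑ i ∈ univ.filter (fun i : Fin n => (i : ℕ) < k), c (i + j)
      = cyclicPartialSum c (j + k) - cyclicPartialSum c j := by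
  rw [cyclicPartialSum, cyclicPartialSum, sum_range_add, add_sub_cancel_left]
  have hcast : ∀ m < k, ((m : Fin n) : ℕ) = m := fun m hm => Fin.val_cast_of_lt (hm.trans_le hk)
  refine sum_nbij' (fun i => i) (fun m => m) (by simp) (fun m hm => ?_) (by simp)
    (fun m hm => hcast m (mem_range.1 hm)) (fun i _ => by simp [add_comm])
  simpa [hcast m (mem_range.1 hm)] using hm

end CyclicPartialSum

section CycleLemma

variable {α : Type*} [AddCommGroup α] [LinearOrder α] [IsOrderedAddMonoid α] {T : ℕ → α} {n : ℕ}
  {p : α}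

/-- The last minimiser of `T` on `[0, n)` works. -/
theorem exists_forall_lt_shift (hn : 0 < n) (hp : 0 < p) (hper : ∀ k, T (n + k) = T k + p) :
    ∃ j < n, ∀ k, 1 ≤ k → k ≤ n → T j < T (j + k) := by
  obtain ⟨j₀, hj₀, hj₀_min⟩ := exists_min_image (range n) T (nonempty_range_iff.2 hn.ne')
  let argmins := (range n).filter fun m => T m = T j₀
  have hne : argmins.Nonempty := ⟨j₀, mem_filter.2 ⟨hj₀, rfl⟩⟩
  obtain ⟨hj_lt, hj_eq⟩ := mem_filter.1 (argmins.max'_mem hne)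
  set j := argmins.max' hne
  have hjn : j < n := mem_range.1 hj_lt
  have hj_min : ∀ m < n, T j ≤ T m := fun m hm => hj_eq ▸ hj₀_min m (mem_range.2 hm)
  have hj_last : ∀ m, j < m → m < n → T j < T m := by
    intro m hjm hm
    refine (hj_min m hm).lt_of_ne fun h => hjm.not_ge (argmins.le_max' m ?_)
    exact mem_filter.2 ⟨mem_range.2 hm, h ▸ hj_eq⟩
  refine ⟨j, hjn, fun k hk₁ hkn => ?_⟩
  rcases lt_or_ge (j + k) n with h | h
  · exact hj_last _ (by omega) h
  · obtain ⟨m, hm⟩ : ∃ m, j + k = n + m := ⟨j + k - n, by omega⟩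
    rw [hm, hper]
    exact lt_add_of_le_of_pos (hj_min m (by omega)) hp

/-- Good starting points `a < b` would give a segment `[a, b)` of positive sum below `p`. -/
theorem not_forall_lt_shift_of_lt (hper : ∀ k, T (n + k) = T k + p)
    (hgap : ∀ a b, a ≤ b → T a < T b → p ≤ T b - T a) {a b : ℕ} (hab : a < b) (hbn : b < n)
    (ha : ∀ k, 1 ≤ k → k ≤ n → T a < T (a + k)) : ¬ ∀ k, 1 ≤ k → k ≤ n → T b < T (b + k) := by
  intro hb
  have h₁ := ha (b - a) (by omega) (by omega)
  have h₂ := hb (n - b + a) (by omega) (by omega)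
  rw [Nat.add_sub_cancel' hab.le] at h₁
  rw [show b + (n - b + a) = n + a by omega, hper] at h₂
  exact (sub_lt_iff_lt_add'.2 h₂).not_ge (hgap a b hab.le h₁)

theorem existsUnique_forall_lt_shift (hn : 0 < n) (hp : 0 < p) (hper : ∀ k, T (n + k) = T k + p)
    (hgap : ∀ a b, a ≤ b → T a < T b → p ≤ T b - T a) :
    ∃! j : Fin n, ∀ k, 1 ≤ k → k ≤ n → T j < T (j + k) := by
  obtain ⟨j, hjn, hj⟩ := exists_forall_lt_shift hn hp hper
  refine ⟨⟨j, hjn⟩, hj, fun i hi => Fin.ext ?_⟩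
  rcases lt_trichotomy (i : ℕ) j with h | h | h
  · exact (not_forall_lt_shift_of_lt hper hgap h hjn hi hj).elim
  · exact h
  · exact (not_forall_lt_shift_of_lt hper hgap h i.isLt hj hi).elim

end CycleLemma

def StaysPositive {n : ℕ} (c : Fin n → ℤ) : Prop :=
  ∀ k : ℕ, 1 ≤ k → k ≤ n → 0 < ∑ i ∈ univ.filter (fun i : Fin n => (i : ℕ) < k), c i

theorem existsUnique_staysPositive_rotate (P : Finset ℤ) {p : ℤ} (hp : 0 < p)
    (hmin : ∀ q : ℤ, 0 < q → (∃ l : List ℤ, (∀ s ∈ l, s ∈ P) ∧ l.sum = q) → p ≤ q)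
    {n : ℕ} [NeZero n] (f : Fin n → P) (hf : ∑ i, (f i : ℤ) = p) :
    ∃! j : Fin n, StaysPositive fun i => (f (i + j) : ℤ) := by
  set T := cyclicPartialSum fun i => (f i : ℤ)
  have hper : ∀ k, T (n + k) = T k + p := fun k => hf ▸ cyclicPartialSum_period_add _ k
  have hgap : ∀ a b, a ≤ b → T a < T b → p ≤ T b - T a := by
    intro a b hab hlt
    refine hmin _ (sub_pos.2 hlt) ?_
    rw [cyclicPartialSum_sub _ hab]
    exact exists_list_sum_eq_sum _ fun i => (f _).2
  refine (existsUnique_congr fun j => forall₃_congr fun k _ hk => ?_).2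
    (existsUnique_forall_lt_shift (NeZero.pos n) hp hper hgap)
  rw [sum_filter_lt_rotate (fun i => (f i : ℤ)) j hk, sub_pos]

theorem posWalkWeight_eq_sum_rotate (R : Type*) [CommRing R] (P : Finset ℤ) (lam : ℤ → R) {n : ℕ}
    [NeZero n] (p : ℤ) (j : Fin n) :
    posWalkWeight R P lam n p = ∑ f : Fin n → P,
      if StaysPositive (fun i => (f (i + j) : ℤ)) ∧ ∑ i, (f i : ℤ) = p
      then ∏ i, lam (f i) else 0 := by
  refine (Fintype.sum_equiv ((Equiv.addRight j).symm.arrowCongr (Equiv.refl P)) _ _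
    fun f => ?_).symm
  simp only [Equiv.arrowCongr_apply, Equiv.coe_refl, Equiv.symm_symm, Equiv.coe_addRight,
    Function.comp_apply, id_eq]
  have hsum : ∑ i, (f (i + j) : ℤ) = ∑ i, (f i : ℤ) :=
    Equiv.sum_comp (Equiv.addRight j) fun i => (f i : ℤ)
  have hprod : ∏ i, lam (f (i + j)) = ∏ i, lam (f i) :=
    Equiv.prod_comp (Equiv.addRight j) fun i => lam (f i)
  rw [hsum, hprod]
  exact if_congr Iff.rfl rfl rfl

theorem statement3_general (R : Type*) [CommRing R] (P : Finset ℤ) (lam : ℤ → R)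
    (p : ℤ) (hp : 0 < p)
    (hmin : ∀ q : ℤ, 0 < q → (∃ l : List ℤ, (∀ s ∈ l, s ∈ P) ∧ l.sum = q) → p ≤ q)
    (n : ℕ) (hn : 1 ≤ n) :
    n • posWalkWeight R P lam n p
      = ((∑ i ∈ P, AddMonoidAlgebra.single i (lam i) : AddMonoidAlgebra R ℤ) ^ n).coeff p := by
  have : NeZero n := ⟨by omega⟩
  calc n • posWalkWeight R P lam n p
      = ∑ j : Fin n, ∑ f : Fin n → P,
          if StaysPositive (fun i => (f (i + j) : ℤ)) ∧ ∑ i, (f i : ℤ) = p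
          then ∏ i, lam (f i) else 0 := by
        simp only [← posWalkWeight_eq_sum_rotate, sum_const, card_univ, Fintype.card_fin]
    _ = ∑ f : Fin n → P, if ∑ i, (f i : ℤ) = p then ∏ i, lam (f i) else 0 := by
        rw [sum_comm]
        exact sum_congr rfl fun f _ => sum_ite_and_of_existsUnique
          (existsUnique_staysPositive_rotate P hp hmin f) _
    _ = _ := (coeff_pow_sum_single P lam n p).symm

/-- one-dimensional cycle lemma: if `p` is the smallest positive
endpoint of a walk with steps in `P`, then `n` times the total weight of the `n`-step
walks from `0` to `p` that stay positive after the start equals the coefficient of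
`x^p` in `(∑_{i ∈ P} λ_i x^i)^n`. -/
theorem statement3 (R : Type*) [CommRing R] (P : Finset ℤ) (lam : ℤ → R)
    (p : ℤ) (hp : 0 < p)
    (hex : ∃ l : List ℤ, (∀ s ∈ l, s ∈ P) ∧ l.sum = p)
    (hmin : ∀ q : ℤ, 0 < q → (∃ l : List ℤ, (∀ s ∈ l, s ∈ P) ∧ l.sum = q) → p ≤ q)
    (n : ℕ) (hn : 1 ≤ n) :
    n • posWalkWeight R P lam n p
      = ((∑ i ∈ P, AddMonoidAlgebra.single i (lam i) : AddMonoidAlgebra R ℤ) ^ n).coeff p :=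
  statement3_general R P lam p hp hmin n hn

end SlitPlane
end

section
/- On the diagonal square lattice with steps {(1,1),(1,-1),(-1,1),(-1,-1)}, let B(x;t,v) in Q[x,x^{-1},v][[t]] be the generating function for bilateral walks, where t marks the length, x the abscissa of the endpoint, and v the number of steps in {(1,1),(-1,-1)}. Then B(x;t,v)^2 * (1 - 4 t^2 (v + x^2)(v + x^{-2})) = 1. -/
/-!
Marking the ordinate of the endpoint by a Laurent variable `y`, walks of length `n` are counted by
`(y (x v + x⁻¹) + y⁻¹ (x + x⁻¹ v))ⁿ`, and bilateral walks by its constant term in `y`. By the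
binomial theorem that term is `C(2k, k) ((x v + x⁻¹)(x + x⁻¹ v))ᵏ` when `n = 2k` and vanishes for
odd `n`, while `(x v + x⁻¹)(x + x⁻¹ v) = (v + x²)(v + x⁻²) =: c`. So `B(t) = G(c t²)` with
`G(u) = ∑ C(2k, k) uᵏ`, and `G(u)² = (1 - 4u)⁻¹` is the convolution identity
`∑ C(2i, i) C(2j, j) = 4ᵏ` over `i + j = k`.
-/

open scoped Classical
open PowerSeries

namespace SlitPlane

/-- The coefficient ring `ℚ[x, x⁻¹, v]`: monomial `(i, m)` stands for `x^i v^m`. -/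
abbrev A0 := AddMonoidAlgebra ℚ (ℤ × ℕ)

/-- The monomial `x²`. -/
noncomputable def x2A : A0 := AddMonoidAlgebra.single ((2 : ℤ), (0 : ℕ)) 1

/-- The monomial `x⁻²`. -/
noncomputable def xinv2A : A0 := AddMonoidAlgebra.single ((-2 : ℤ), (0 : ℕ)) 1

/-- The monomial `v`. -/
noncomputable def vA : A0 := AddMonoidAlgebra.single ((0 : ℤ), (1 : ℕ)) 1

/-- The steps of the diagonal square lattice. -/
def Sdiag : Finset Pt := {(1, 1), (1, -1), (-1, 1), (-1, -1)}

/-- Number of bilateral walks on the diagonal lattice of length `n` ending at `(i,0)`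
with exactly `m` steps in `{(1,1), (-1,-1)}`. -/
noncomputable def bilatCount (n : ℕ) (i : ℤ) (m : ℕ) : ℕ :=
  Set.ncard {l : List Pt | l.length = n ∧ StepsIn Sdiag l ∧ l.sum = (i, 0) ∧
    l.countP (fun s => s = (1, 1) ∨ s = (-1, -1)) = m}

end SlitPlane

open Finset in
theorem Nat.sum_antidiagonal_centralBinom_mul (k : ℕ) :
    ∑ p ∈ antidiagonal k, centralBinom p.1 * centralBinom p.2 = 4 ^ k := by
  set S : ℕ → ℕ := fun k => ∑ p ∈ antidiagonal k, centralBinom p.1 * centralBinom p.2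
  set U : ℕ → ℕ := fun k => ∑ p ∈ antidiagonal k, p.1 * (centralBinom p.1 * centralBinom p.2)
  have two_mul_U (k : ℕ) : 2 * U k = k * S k := by
    have hswap : U k = ∑ p ∈ antidiagonal k, p.2 * (centralBinom p.1 * centralBinom p.2) := by
      rw [← Nat.sum_antidiagonal_swap]
      exact sum_congr rfl fun p _ => by simp only [Prod.fst_swap, Prod.snd_swap]; ring
    rw [two_mul]
    nth_rewrite 2 [hswap]
    rw [← sum_add_distrib, mul_sum]
    refine sum_congr rfl fun p hp => ?_
    rw [← mem_antidiagonal.mp hp]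
    ring
  -- shift the index and use `(j + 1) C(j + 1) = 2 (2j + 1) C(j)`
  have U_succ (k : ℕ) : U (k + 1) = 4 * U k + 2 * S k := by
    simp only [U, S, Nat.sum_antidiagonal_succ, mul_sum, ← sum_add_distrib, zero_mul, zero_add]
    refine sum_congr rfl fun p _ => ?_
    have := succ_mul_centralBinom_succ p.1
    calc (p.1 + 1) * ((p.1 + 1).centralBinom * p.2.centralBinom)
        = (p.1 + 1) * (p.1 + 1).centralBinom * p.2.centralBinom := by ring
      _ = _ := by rw [this]; ring
  change S k = 4 ^ k
  induction k with
  | zero => simp [S]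
  | succ k ih =>
    apply Nat.eq_of_mul_eq_mul_left k.succ_pos
    have h := two_mul_U (k + 1)
    rw [U_succ] at h
    rw [pow_succ, ← ih]
    linarith [two_mul_U k]

namespace PowerSeries

variable {R : Type*} [CommRing R]

theorem mk_centralBinom_sq_mul_one_sub_eq_one :
    (mk fun k => (k.centralBinom : R)) ^ 2 * (1 - 4 * X) = 1 := by
  have hsq : (mk fun k => (k.centralBinom : R)) ^ 2 = rescale 4 (mk 1) := by
    ext k
    rw [sq, coeff_mul, coeff_rescale, coeff_mk, Pi.one_apply, mul_one]
    simp only [coeff_mk]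
    simpa using congrArg (Nat.cast : ℕ → R) k.sum_antidiagonal_centralBinom_mul
  rw [hsq, ← map_ofNat C 4, ← rescale_X, ← map_one (rescale (4 : R)), ← map_sub, ← map_mul,
    mk_one_mul_one_sub_eq_one, map_one]

theorem sq_mul_one_sub_eq_one_of_coeff (c : R) (B : R⟦X⟧)
    (hB : ∀ n, coeff n B = if 2 ∣ n then ((n / 2).centralBinom : R) * c ^ (n / 2) else 0) :
    B ^ 2 * (1 - 4 * X ^ 2 * C c) = 1 := by
  have hB' : B = expand 2 two_ne_zero (rescale c (mk fun k => (k.centralBinom : R))) := by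
    ext n
    rw [hB, coeff_expand]
    simp only [coeff_rescale, coeff_mk, mul_comm]
  have h4 : expand 2 two_ne_zero (rescale c (1 - 4 * X)) = 1 - 4 * X ^ 2 * C c := by
    rw [map_sub, map_one, map_mul, map_ofNat, rescale_X, map_sub, map_one, map_mul, map_mul,
      map_ofNat, expand_C, expand_X]
    ring
  rw [hB', ← h4, ← map_pow, ← map_pow, ← map_mul, ← map_mul,
    mk_centralBinom_sq_mul_one_sub_eq_one, map_one, map_one]

end PowerSeries

namespace List

variable {α : Type*} [DecidableEq α]

def listsOfLength (S : Finset α) : ℕ → Finset (List α)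
  | 0 => {[]}
  | n + 1 => (S ×ˢ listsOfLength S n).image fun p => p.1 :: p.2

theorem mem_listsOfLength {S : Finset α} {n : ℕ} {l : List α} :
    l ∈ listsOfLength S n ↔ l.length = n ∧ ∀ s ∈ l, s ∈ S := by
  induction n generalizing l with
  | zero => simp +contextual [listsOfLength]
  | succ n ih =>
    cases l with
    | nil => simp [listsOfLength]
    | cons s l => simp [listsOfLength, ih, and_assoc, and_left_comm]

theorem sum_pow_eq_sum_listsOfLength {R : Type*} [CommSemiring R] (S : Finset α) (w : α → R)
    (n : ℕ) : (∑ s ∈ S, w s) ^ n = ∑ l ∈ listsOfLength S n, (l.map w).prod := by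
  induction n with
  | zero => simp [listsOfLength]
  | succ n ih =>
    rw [pow_succ', ih, listsOfLength, Finset.sum_image (by simp), Finset.sum_product,
      Finset.sum_mul_sum]
    simp

end List

namespace LaurentPolynomial

variable {R : Type*} [CommSemiring R]

theorem coeff_zero_C_mul_T_add_C_mul_T_neg_pow (a b : R) (n : ℕ) :
    ((C a * T 1 + C b * T (-1)) ^ n).coeff 0
      = if 2 ∣ n then ((n / 2).centralBinom : R) * (a * b) ^ (n / 2) else 0 := by
  have term (j : ℕ) : (C a * T 1) ^ j * (C b * T (-1)) ^ (n - j) * (n.choose j : R[T;T⁻¹])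
      = C (a ^ j * b ^ (n - j) * n.choose j) * T (j - (n - j : ℕ)) := by
    simp only [mul_pow, T_pow, map_mul, map_pow, map_natCast, sub_eq_add_neg, T_add]
    ring_nf
  simp_rw [add_pow, term, ← single_eq_C_mul_T, AddMonoidAlgebra.coeff_sum,
    Finsupp.finsetSum_apply, AddMonoidAlgebra.coeff_single, Finsupp.single_apply]
  split_ifs with hn
  · obtain ⟨k, rfl⟩ := hn
    rw [Finset.sum_eq_single k (fun j _ hj => if_neg (by omega)) (by simp; omega),
      if_pos (by omega), Nat.mul_div_cancel_left k two_pos, two_mul, Nat.add_sub_cancel,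
      Nat.centralBinom_eq_two_mul_choose, two_mul, mul_pow, mul_comm]
  · exact Finset.sum_eq_zero fun j _ => if_neg (by omega)

end LaurentPolynomial

namespace SlitPlane

open LaurentPolynomial (T T_zero T_add single_eq_C_mul_T)

/-- `s ↦ x^{s.1} v^{[s ∈ {(1,1), (-1,-1)}]} y^{s.2}`, with `y` the Laurent variable over `A0`. -/
noncomputable def stepWeight (s : Pt) : LaurentPolynomial A0 :=
  LaurentPolynomial.C (AddMonoidAlgebra.single (s.1, if s = (1, 1) ∨ s = (-1, -1) then 1 else 0) 1)
    * T s.2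

theorem prod_map_stepWeight (l : List Pt) :
    (l.map stepWeight).prod = LaurentPolynomial.C (AddMonoidAlgebra.single
      (l.sum.1, l.countP (fun s => s = (1, 1) ∨ s = (-1, -1))) 1) * T l.sum.2 := by
  induction l with
  | nil =>
    simp only [List.map_nil, List.prod_nil, List.sum_nil, List.countP_nil, Prod.fst_zero,
      Prod.snd_zero, T_zero, mul_one]
    rfl
  | cons s l ih =>
    rw [List.map_cons, List.prod_cons, ih, stepWeight, List.sum_cons, List.countP_cons,
      Prod.snd_add, T_add, mul_mul_mul_comm, ← map_mul, AddMonoidAlgebra.single_mul_single,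
      one_mul, Prod.mk_add_mk, Prod.fst_add, Nat.add_comm (List.countP _ l)]
    simp only [decide_eq_true_eq]

theorem bilatCount_eq_card (n : ℕ) (i : ℤ) (m : ℕ) :
    bilatCount n i m = ((List.listsOfLength Sdiag n).filter fun l => l.sum = (i, 0) ∧
      l.countP (fun s => s = (1, 1) ∨ s = (-1, -1)) = m).card := by
  rw [bilatCount, ← Set.ncard_coe_finset]
  congr 1
  ext l
  simp [List.mem_listsOfLength, StepsIn, and_assoc]

theorem coeff_sum_stepWeight_pow (n : ℕ) (i : ℤ) (m : ℕ) :
    (((∑ s ∈ Sdiag, stepWeight s) ^ n).coeff 0).coeff (i, m) = bilatCount n i m := by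
  rw [List.sum_pow_eq_sum_listsOfLength]
  simp_rw [prod_map_stepWeight, ← single_eq_C_mul_T, AddMonoidAlgebra.coeff_sum,
    Finsupp.finsetSum_apply, AddMonoidAlgebra.coeff_single, Finsupp.single_apply]
  rw [← Finset.sum_filter, AddMonoidAlgebra.coeff_sum, Finsupp.finsetSum_apply]
  simp_rw [AddMonoidAlgebra.coeff_single, Finsupp.single_apply]
  rw [Finset.sum_boole, Finset.filter_filter, bilatCount_eq_card]
  congr 2
  ext l
  simp only [Finset.mem_filter, Prod.ext_iff]
  tauto

noncomputable def xA : A0 := AddMonoidAlgebra.single (1, 0) 1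

noncomputable def xinvA : A0 := AddMonoidAlgebra.single (-1, 0) 1

theorem sum_stepWeight : ∑ s ∈ Sdiag, stepWeight s = LaurentPolynomial.C (xA * vA + xinvA) * T 1
    + LaurentPolynomial.C (xA + xinvA * vA) * T (-1) := by
  rw [Sdiag, Finset.sum_insert (by decide), Finset.sum_insert (by decide),
    Finset.sum_insert (by decide), Finset.sum_singleton]
  simp only [stepWeight, xA, xinvA, vA, map_add, AddMonoidAlgebra.single_mul_single,
    Prod.mk_add_mk, add_zero, zero_add, mul_one]
  norm_num
  ring

theorem mul_eq_vA_add_x2A_mul_vA_add_xinv2A :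
    (xA * vA + xinvA) * (xA + xinvA * vA) = (vA + x2A) * (vA + xinv2A) := by
  have h : xA * xinvA = 1 := by
    rw [xA, xinvA, AddMonoidAlgebra.single_mul_single, one_mul, Prod.mk_add_mk, add_neg_cancel,
      add_zero]
    rfl
  have hx : x2A = xA ^ 2 := by simp [x2A, xA, AddMonoidAlgebra.single_pow]
  have hxinv : xinv2A = xinvA ^ 2 := by simp [xinv2A, xinvA, AddMonoidAlgebra.single_pow]
  rw [hx, hxinv]
  linear_combination (vA ^ 2 - xA * xinvA) * h

/-- the generating function `B(x;t,v)` of bilateral walks on the diagonal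
square lattice (with `v` marking the steps `(1,1)` and `(-1,-1)`) satisfies
`B² (1 - 4t²(v + x²)(v + x⁻²)) = 1`. -/
theorem statement4 (B : PowerSeries A0)
    (hB : ∀ (n : ℕ) (i : ℤ) (m : ℕ),
      (PowerSeries.coeff n B).coeff (i, m) = (bilatCount n i m : ℚ)) :
    B ^ 2 * (1 - 4 * PowerSeries.X ^ 2
      * PowerSeries.C ((vA + x2A) * (vA + xinv2A))) = 1 := by
  refine PowerSeries.sq_mul_one_sub_eq_one_of_coeff _ B fun n => ?_
  ext p
  rw [hB, ← coeff_sum_stepWeight_pow, sum_stepWeight,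
    LaurentPolynomial.coeff_zero_C_mul_T_add_C_mul_T_neg_pow,
    mul_eq_vA_add_x2A_mul_vA_add_xinv2A]

end SlitPlane
end

section
/- On the diagonal square lattice with steps {(1,1),(1,-1),(-1,1),(-1,-1)}, for n >= 1, twice the number of walks of length 2n on the slit plane ending at (2,0) equals 4^n * C_n, where C_n = binomial(2n,n)/(n+1) is the n-th Catalan number. More precisely, for 1 <= m <= n, the number a of such walks having exactly 2m-1 steps in {(-1,-1),(1,1)} satisfies 2n * a = 4^n * binomial(n,m) * binomial(n,m-1) (the Narayana distribution). -/
open scoped Classical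
open PowerSeries

namespace SlitPlane

/-- Number of walks of length `n` on the slit plane with diagonal steps, ending at
`(2,0)`, with exactly `v` steps in `{(1,1), (-1,-1)}`. -/
noncomputable def slitDiagCount (n v : ℕ) : ℕ :=
  Set.ncard {l : List Pt | l.length = n ∧ StepsIn Sdiag l ∧ AvoidsH l ∧
    l.sum = (2, 0) ∧ l.countP (fun s => s = (1, 1) ∨ s = (-1, -1)) = v}

open Finset

def sg (b : Bool) : ℤ := if b then 1 else -1

lemma sg_le (b : Bool) : sg b ≤ 1 := by cases b <;> simp [sg]
lemma le_sg (b : Bool) : -1 ≤ sg b := by cases b <;> simp [sg]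
lemma sg_not (b : Bool) : sg (!b) = - sg b := by cases b <;> simp [sg]

/-- Partial sums of a `±1` sequence. -/
def ps (g : ℕ → Bool) (i : ℕ) : ℤ := ∑ j ∈ Finset.range i, sg (g j)

lemma ps_zero (g : ℕ → Bool) : ps g 0 = 0 := by simp [ps]

lemma ps_succ (g : ℕ → Bool) (i : ℕ) : ps g (i + 1) = ps g i + sg (g i) :=
  Finset.sum_range_succ _ _

lemma ps_step (g : ℕ → Bool) (i : ℕ) :
    ps g (i+1) = ps g i + 1 ∨ ps g (i+1) = ps g i - 1 := by
  rw [ps_succ]; cases h : g i <;> simp [sg, sub_eq_add_neg]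

lemma ps_even (g : ℕ → Bool) (i : ℕ) : Even (ps g i + i) := by
  induction i with
  | zero => simp [ps_zero]
  | succ k ih =>
    rw [ps_succ]
    rcases ih with ⟨r, hr⟩
    cases h : g k
    · exact ⟨r, by push_cast; simp [sg]; push_cast at hr; linarith⟩
    · exact ⟨r + 1, by push_cast; simp [sg]; push_cast at hr; linarith⟩

lemma ps_add_le (g : ℕ → Bool) (i k : ℕ) : ps g (i + k) ≤ ps g i + k := by
  induction k with
  | zero => simp
  | succ j ih =>
    rw [← add_assoc, ps_succ]
    have := sg_le (g (i + j))
    push_cast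
    push_cast at ih
    omega

lemma le_ps_add (g : ℕ → Bool) (i k : ℕ) : ps g i - k ≤ ps g (i + k) := by
  induction k with
  | zero => simp
  | succ j ih =>
    rw [← add_assoc, ps_succ]
    have := le_sg (g (i + j))
    push_cast
    push_cast at ih
    omega

lemma ps_neg (g : ℕ → Bool) (i : ℕ) : ps (fun t => !(g t)) i = - ps g i := by
  unfold ps
  rw [← Finset.sum_neg_distrib]
  exact Finset.sum_congr rfl fun j _ => sg_not (g j)

/-- shift formula for partial sums -/
lemma ps_shift (g : ℕ → Bool) (j : ℕ) (i : ℕ) :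
    ps (fun t => g (t + j)) i = ps g (j + i) - ps g j := by
  induction i with
  | zero => simp [ps_zero]
  | succ k ih =>
    rw [ps_succ, ih, ← add_assoc, ps_succ, add_comm k j]
    ring

/-- Sum over a window of a periodic function is shift-invariant. -/
lemma sum_window {M : Type*} [AddCancelCommMonoid M] (h : ℕ → M) (N : ℕ)
    (hper : ∀ t, h (t + N) = h t) (j : ℕ) :
    ∑ t ∈ range N, h (t + j) = ∑ t ∈ range N, h t := by
  induction j with
  | zero => simp
  | succ k ih =>
    have e1 : ∑ t ∈ range (N+1), h (t + k) = (∑ t ∈ range N, h (t + 1 + k)) + h k := by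
      rw [Finset.sum_range_succ']
      simp [add_comm, add_assoc, add_left_comm]
    have e2 : ∑ t ∈ range (N+1), h (t + k) = (∑ t ∈ range N, h (t + k)) + h (N + k) := by
      rw [Finset.sum_range_succ]
    have e3 : h (N + k) = h k := by rw [add_comm]; exact hper k
    have : (∑ t ∈ range N, h (t + 1 + k)) + h k = (∑ t ∈ range N, h (t + k)) + h k := by
      rw [← e1, e2, e3]
    have e4 : ∑ t ∈ range N, h (t + (k+1)) = ∑ t ∈ range N, h (t + 1 + k) := by
      apply Finset.sum_congr rfl; intro t _; ring_nf
    rw [e4, add_right_cancel this, ih]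

/-- Discrete intermediate value theorem for `±1` paths. -/
lemma ivt (g : ℕ → Bool) (ℓ : ℤ) (h0 : ps g 0 ≤ ℓ) :
    ∀ N, ℓ ≤ ps g N → ∃ j ≤ N, ps g j = ℓ := by
  intro N
  induction N with
  | zero => intro h; exact ⟨0, le_refl 0, le_antisymm h0 h⟩
  | succ k ih =>
    intro h
    by_cases hk : ℓ ≤ ps g k
    · obtain ⟨j, hj, hje⟩ := ih hk
      exact ⟨j, Nat.le_succ_of_le hj, hje⟩
    · rcases ps_step g k with h' | h' <;>
        exact ⟨k+1, le_refl _, by omega⟩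

variable {N : ℕ} {α : Type*}

/-- Periodic extension of a function on `Fin N`. -/
def ex [NeZero N] (f : Fin N → α) (t : ℕ) : α :=
  f ⟨t % N, Nat.mod_lt _ (Nat.pos_of_ne_zero (NeZero.ne N))⟩

lemma ex_per [NeZero N] (f : Fin N → α) (t : ℕ) : ex f (t + N) = ex f t := by
  simp [ex]

lemma ex_fin [NeZero N] (f : Fin N → α) (i : Fin N) : ex f i.val = f i := by
  simp [ex, Nat.mod_eq_of_lt i.isLt]

/-- Cyclic rotation of a word. -/
def rot [NeZero N] (j : ℕ) (f : Fin N → α) : Fin N → α := fun i => ex f (i.val + j)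

lemma ex_rot [NeZero N] (j : ℕ) (f : Fin N → α) (t : ℕ) :
    ex (rot j f) t = ex f (t + j) := by
  simp only [ex, rot]
  congr 1
  apply Fin.ext
  simp [Nat.mod_add_mod, Nat.add_mod_left]

lemma rot_rot [NeZero N] (j k : ℕ) (f : Fin N → α) :
    rot j (rot k f) = rot (j + k) f := by
  funext i
  simp only [rot]
  rw [ex_rot, add_assoc, add_comm j k]

lemma rot_N [NeZero N] (f : Fin N → α) : rot N f = f := by
  funext i
  simp only [rot]
  rw [ex_per, ex_fin]

/-- Partial sums of the periodic extension of a Boolean word. -/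
def pf [NeZero N] (g : Fin N → Bool) : ℕ → ℤ := ps (fun t => ex g t)

lemma pf_fin_congr [NeZero N] (g : Fin N → Bool) (i : ℕ) (h : i ≤ N) :
    True := trivial

lemma pf_rot [NeZero N] (g : Fin N → Bool) (j i : ℕ) :
    pf (rot j g) i = pf g (j + i) - pf g j := by
  unfold pf
  have : (fun t => ex (rot j g) t) = fun t => ex g (t + j) := by
    funext t; exact ex_rot j g t
  rw [this]
  exact ps_shift (fun t => ex g t) j i

lemma pf_period [NeZero N] (g : Fin N → Bool) (t : ℕ) :
    pf g (t + N) = pf g t + pf g N := by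
  unfold pf
  have h1 := ps_shift (fun s => ex g s) t N
  have h2 : ps (fun s => ex g (s + t)) N = ps (fun s => ex g s) N := by
    unfold ps
    exact sum_window (fun s => sg (ex g s)) N
      (fun s => by show sg (ex g (s + N)) = sg (ex g s); rw [ex_per]) t
  rw [h2] at h1
  omega




-- encoding
def stp (p : Bool × Bool) : Pt := (sg p.1, sg p.2)

variable {N : ℕ}

def wd (f : Fin N → Bool × Bool) : List Pt := List.ofFn fun i => stp (f i)

lemma stp_inj : Function.Injective stp := by
  rintro ⟨a, b⟩ ⟨c, d⟩ h
  simp only [stp, Prod.mk.injEq] at h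
  cases a <;> cases b <;> cases c <;> cases d <;> simp_all [sg]

lemma wd_inj : Function.Injective (wd (N := N)) := by
  intro f g h
  have := List.ofFn_inj.mp h
  funext i
  exact stp_inj (congrFun this i)

lemma length_wd (f : Fin N → Bool × Bool) : (wd f).length = N := by simp [wd]

lemma stp_mem (p : Bool × Bool) : stp p ∈ Sdiag := by
  rcases p with ⟨a, b⟩
  cases a <;> cases b <;> simp [stp, sg, Sdiag]

lemma stepsIn_wd (f : Fin N → Bool × Bool) : StepsIn Sdiag (wd f) := by
  intro s hs
  rw [wd, List.mem_ofFn] at hs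
  obtain ⟨i, rfl⟩ := hs
  exact stp_mem _

lemma mem_Sdiag_decode {s : Pt} (hs : s ∈ Sdiag) :
    stp (decide (s.1 = 1), decide (s.2 = 1)) = s := by
  simp only [Sdiag, Finset.mem_insert, Finset.mem_singleton] at hs
  rcases hs with rfl | rfl | rfl | rfl <;> simp [stp, sg]

/-- The central counting bridge: walks with steps in `Sdiag` of length `N`
correspond to functions `Fin N → Bool × Bool`. -/
lemma ncard_eq_card_filter (N : ℕ) (Q : List Pt → Prop) :
    {l : List Pt | l.length = N ∧ StepsIn Sdiag l ∧ Q l}.ncard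
      = (Finset.univ.filter fun f : Fin N → Bool × Bool => Q (wd f)).card := by
  have himg : {l : List Pt | l.length = N ∧ StepsIn Sdiag l ∧ Q l}
      = wd '' {f : Fin N → Bool × Bool | Q (wd f)} := by
    ext l
    constructor
    · rintro ⟨hlen, hsteps, hQ⟩
      refine ⟨fun i => (decide ((l.get (Fin.cast hlen.symm i)).1 = 1),
        decide ((l.get (Fin.cast hlen.symm i)).2 = 1)), ?_, ?_⟩
      · show Q (wd _)
        have hwd : wd (fun i => (decide ((l.get (Fin.cast hlen.symm i)).1 = 1),
            decide ((l.get (Fin.cast hlen.symm i)).2 = 1))) = l := by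
          apply List.ext_get
          · simp [wd, hlen]
          · intro i h1 h2
            simp only [wd]; rw [List.get_ofFn]
            exact mem_Sdiag_decode (hsteps _ (l.get_mem _))
        rw [hwd]; exact hQ
      · show wd _ = l
        apply List.ext_get
        · simp [wd, hlen]
        · intro i h1 h2
          simp only [wd]; rw [List.get_ofFn]
          exact mem_Sdiag_decode (hsteps _ (l.get_mem _))
    · rintro ⟨f, hf, rfl⟩
      exact ⟨length_wd f, stepsIn_wd f, hf⟩
  rw [himg, Set.ncard_image_of_injective _ wd_inj]
  have : {f : Fin N → Bool × Bool | Q (wd f)}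
      = ↑(Finset.univ.filter fun f : Fin N → Bool × Bool => Q (wd f)) := by
    ext f; simp
  rw [this, Set.ncard_coe_finset]

lemma ncard_eq_card_filter' (N : ℕ) (Q : List Pt → Prop)
    (P : (Fin N → Bool × Bool) → Prop) [DecidablePred P]
    (h : ∀ f, Q (wd f) ↔ P f) :
    {l : List Pt | l.length = N ∧ StepsIn Sdiag l ∧ Q l}.ncard
      = (Finset.univ.filter P).card := by
  rw [ncard_eq_card_filter N Q]
  exact congrArg Finset.card (Finset.filter_congr (fun f _ => h f))


section Translate
variable {N : ℕ} [NeZero N]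

def fa (f : Fin N → Bool × Bool) : Fin N → Bool := fun i => (f i).1
def fb (f : Fin N → Bool × Bool) : Fin N → Bool := fun i => (f i).2

def slitP (f : Fin N → Bool × Bool) : Prop :=
  ∀ i, 1 ≤ i → i ≤ N → ¬(pf (fb f) i = 0 ∧ pf (fa f) i ≤ 0)

def cnt (f : Fin N → Bool × Bool) : ℕ :=
  (Finset.univ.filter fun i => (f i).1 = (f i).2).card

lemma ex_lt {α : Type*} (f : Fin N → α) {t : ℕ} (h : t < N) : ex f t = f ⟨t, h⟩ := by
  simp [ex, Nat.mod_eq_of_lt h]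

lemma vert_succ (l : List Pt) (i : ℕ) (h : i < l.length) :
    vert l (i + 1) = vert l i + l.get ⟨i, h⟩ := by
  unfold vert
  rw [List.sum_take_succ _ _ h]
  rfl

lemma vert_wd (f : Fin N → Bool × Bool) :
    ∀ i, i ≤ N → vert (wd f) i = (pf (fa f) i, pf (fb f) i) := by
  intro i
  induction i with
  | zero => intro _; simp [vert, pf, ps_zero]; rfl
  | succ k ih =>
    intro h
    have hkN : k < N := by omega
    have hk : k < (wd f).length := by rw [length_wd]; omega
    rw [vert_succ _ _ hk, ih (by omega)]
    have hget : (wd f).get ⟨k, hk⟩ = stp (f ⟨k, hkN⟩) := by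
      simp only [wd]; rw [List.get_ofFn]; rfl
    rw [hget]
    show _ = (pf (fa f) (k+1), pf (fb f) (k+1))
    have e1 : pf (fa f) (k+1) = pf (fa f) k + sg (fa f ⟨k, hkN⟩) := by
      unfold pf; rw [ps_succ, ex_lt _ hkN]
    have e2 : pf (fb f) (k+1) = pf (fb f) k + sg (fb f ⟨k, hkN⟩) := by
      unfold pf; rw [ps_succ, ex_lt _ hkN]
    rw [e1, e2]
    rfl

lemma sum_wd (f : Fin N → Bool × Bool) :
    (wd f).sum = (pf (fa f) N, pf (fb f) N) := by
  have h := vert_wd f N le_rfl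
  rw [vert] at h
  rw [← h]
  conv_lhs => rw [← (List.take_length : List.take (wd f).length (wd f) = wd f)]
  rw [length_wd]

lemma countP_ofFn {α : Type*} (p : α → Bool) :
    ∀ {n : ℕ} (g : Fin n → α),
      (List.ofFn g).countP p = ∑ i : Fin n, if p (g i) = true then 1 else 0 := by
  intro n
  induction n with
  | zero => intro g; simp
  | succ k ih =>
    intro g
    rw [List.ofFn_succ, List.countP_cons, Fin.sum_univ_succ, ih]
    omega

lemma stp_diag (p : Bool × Bool) :
    (stp p = ((1 : ℤ), (1 : ℤ)) ∨ stp p = ((-1 : ℤ), (-1 : ℤ))) ↔ p.1 = p.2 := by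
  rcases p with ⟨a, b⟩
  cases a <;> cases b <;> simp [stp, sg] <;> norm_num

lemma cnt_wd (f : Fin N → Bool × Bool) :
    (wd f).countP (fun s => decide (s = ((1:ℤ),(1:ℤ)) ∨ s = ((-1:ℤ),(-1:ℤ)))) = cnt f := by
  show (List.ofFn fun i => stp (f i)).countP _ = _
  rw [countP_ofFn]
  rw [cnt, card_filter]
  apply Finset.sum_congr rfl
  intro i _
  have := stp_diag (f i)
  by_cases h : (f i).1 = (f i).2
  · rw [if_pos h, if_pos (by simpa using this.mpr h)]
  · rw [if_neg h, if_neg (by simpa using fun hc => h (this.mp hc))]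

lemma avoids_wd (f : Fin N → Bool × Bool) : AvoidsH (wd f) ↔ slitP f := by
  unfold AvoidsH slitP
  rw [length_wd]
  apply forall_congr'
  intro i
  constructor
  · intro h h1 h2 hc
    exact h h1 h2 (by rw [vert_wd f i h2]; exact ⟨hc.1, hc.2⟩)
  · intro h h1 h2 hc
    rw [vert_wd f i h2] at hc
    exact h h1 h2 ⟨hc.1, hc.2⟩

lemma pf_N_eq (b : Fin N → Bool) :
    pf b N = 2 * (((univ : Finset (Fin N)).filter fun i => b i).card : ℤ) - N := by
  unfold pf ps
  rw [← Fin.sum_univ_eq_sum_range (fun t => sg (ex b t)) N]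
  rw [Finset.sum_congr rfl (fun i (_ : i ∈ univ) => by rw [ex_fin b i])]
  have h : ∀ i : Fin N, sg (b i) = 2 * (if b i then (1:ℤ) else 0) - 1 := by
    intro i; cases hb : b i <;> simp [sg]
  rw [Finset.sum_congr rfl (fun i _ => h i)]
  rw [Finset.sum_sub_distrib, ← Finset.mul_sum, Finset.sum_boole, Finset.sum_const, card_univ]
  simp
end Translate

lemma card_bool_funs (N k : ℕ) :
    ((univ : Finset (Fin N → Bool)).filter fun a => ((univ : Finset (Fin N)).filter fun i => a i).card = k).card
      = N.choose k := by
  have : N.choose k = ((univ : Finset (Fin N)).powersetCard k).card := by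
    rw [Finset.card_powersetCard, card_univ, Fintype.card_fin]
  rw [this]
  apply Finset.card_bij' (i := fun a _ => (univ : Finset (Fin N)).filter fun i => a i)
    (j := fun s _ => fun i => decide (i ∈ s))
  · intro a ha
    rw [Finset.mem_powersetCard]
    exact ⟨Finset.filter_subset _ _, (Finset.mem_filter.mp ha).2⟩
  · intro s hs
    rw [Finset.mem_filter]
    refine ⟨Finset.mem_univ _, ?_⟩
    rw [Finset.mem_powersetCard] at hs
    rw [← hs.2]
    congr 1
    ext i
    simp
  · intro a ha
    funext i
    simp
  · intro s hs
    ext i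
    simp

lemma card_eq_split (a b : Fin N → Bool) :
    ((univ : Finset (Fin N)).filter fun i => a i = b i).card
      = (((univ : Finset (Fin N)).filter fun i => a i) ∩ ((univ : Finset (Fin N)).filter fun i => b i)).card
        + ((univ : Finset (Fin N)) \ (((univ : Finset (Fin N)).filter fun i => a i) ∪ ((univ : Finset (Fin N)).filter fun i => b i))).card := by
  rw [← Finset.card_union_of_disjoint]
  · congr 1
    ext i
    simp only [Finset.mem_filter, Finset.mem_union, Finset.mem_inter, Finset.mem_sdiff,
      Finset.mem_univ, true_and]
    cases ha : a i <;> cases hb : b i <;> simp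
  · intro s hs1 hs2
    intro i hi
    have h1 := hs1 hi
    have h2 := hs2 hi
    simp only [Finset.mem_inter, Finset.mem_filter, Finset.mem_sdiff, Finset.mem_union,
      Finset.mem_univ, true_and] at h1 h2
    exact absurd (Or.inl h1.1) h2

/-- Core fiber count: given a bridge `b` (with `n` trues), the number of `a` with
`n+1` trues agreeing with `b` in exactly `2m-1` places is `C(n,m)C(n,m-1)`. -/
lemma card_inter_funs (n m : ℕ) (hm1 : 1 ≤ m) (hmn : m ≤ n) (b : Fin (2*n) → Bool)
    (hb : ((univ : Finset (Fin (2*n))).filter fun i => b i).card = n) :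
    ((univ : Finset (Fin (2*n) → Bool)).filter fun a =>
      ((univ : Finset (Fin (2*n))).filter fun i => a i).card = n + 1 ∧
      ((univ : Finset (Fin (2*n))).filter fun i => a i = b i).card = 2*m-1).card
      = n.choose m * n.choose (m-1) := by
  set B : Finset (Fin (2*n)) := (univ : Finset (Fin (2*n))).filter fun i => b i with hBdef
  have hcompl : ((univ : Finset (Fin (2*n))) \ B).card = n := by
    rw [Finset.card_sdiff_of_subset (Finset.subset_univ B), card_univ, Fintype.card_fin, hb]
    omega
  have target : n.choose m * n.choose (m-1)
      = ((B.powersetCard m) ×ˢ (((univ : Finset (Fin (2*n))) \ B).powersetCard (n+1-m))).card := by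
    rw [Finset.card_product, Finset.card_powersetCard, Finset.card_powersetCard, hb, hcompl]
    congr 1
    have h1 : n + 1 - m = n - (m - 1) := by omega
    rw [h1, Nat.choose_symm (by omega)]
  rw [target]
  -- the key cardinality fact, used in both directions
  have key : ∀ a : Fin (2*n) → Bool,
      (((univ : Finset (Fin (2*n))).filter fun i => a i).card = n + 1) →
      ∀ x : ℕ, ((((univ : Finset (Fin (2*n))).filter fun i => a i) ∩ B).card = x) →
      ((((univ : Finset (Fin (2*n))).filter fun i => a i = b i).card = 2*m-1) ↔ x = m) := by
    intro a hA x hx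
    set A : Finset (Fin (2*n)) := (univ : Finset (Fin (2*n))).filter fun i => a i with hAdef
    have hsplit := card_eq_split a b
    rw [← hAdef, ← hBdef] at hsplit
    have hcompl2 : ((univ : Finset (Fin (2*n))) \ (A ∪ B)).card = 2*n - (A ∪ B).card := by
      rw [Finset.card_sdiff_of_subset (Finset.subset_univ _), card_univ, Fintype.card_fin]
    rw [hcompl2] at hsplit
    have hunion := Finset.card_union_add_card_inter A B
    have hxb : (A ∩ B).card ≤ B.card := Finset.card_le_card (Finset.inter_subset_right)
    rw [hsplit]
    omega
  apply Finset.card_bij' (i := fun a _ => ((((univ : Finset (Fin (2*n))).filter fun i => a i) ∩ B),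
      (((univ : Finset (Fin (2*n))).filter fun i => a i) \ B)))
    (j := fun P _ => fun i => decide (i ∈ P.1 ∪ P.2))
  · -- forward membership
    intro a ha
    rw [Finset.mem_filter] at ha
    obtain ⟨-, hA, hcnt⟩ := ha
    have hx := (key a hA _ rfl).mp hcnt
    rw [Finset.mem_product, Finset.mem_powersetCard, Finset.mem_powersetCard]
    refine ⟨⟨Finset.inter_subset_right, hx⟩, ?_, ?_⟩
    · intro i hi
      rw [Finset.mem_sdiff] at hi
      exact Finset.mem_sdiff.mpr ⟨Finset.mem_univ _, hi.2⟩
    · show (((univ : Finset (Fin (2*n))).filter fun i => a i) \ B).card = n + 1 - m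
      have h2 := Finset.card_inter_add_card_sdiff ((univ : Finset (Fin (2*n))).filter fun i => a i) B
      have hxb : (((univ : Finset (Fin (2*n))).filter fun i => a i) ∩ B).card ≤ B.card :=
        Finset.card_le_card (Finset.inter_subset_right)
      omega
  · -- backward membership
    intro P hP
    rw [Finset.mem_product, Finset.mem_powersetCard, Finset.mem_powersetCard] at hP
    obtain ⟨⟨hP1, hP1c⟩, hP2, hP2c⟩ := hP
    have hdisj : Disjoint P.1 P.2 := by
      intro s hs1 hs2 i hi
      have h1 := hP1 (hs1 hi)
      have h2 := hP2 (hs2 hi)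
      rw [Finset.mem_sdiff] at h2
      exact absurd h1 h2.2
    have hfilter : ((univ : Finset (Fin (2*n))).filter fun i => decide (i ∈ P.1 ∪ P.2) = true) = P.1 ∪ P.2 := by
      ext i; simp
    have hAcard : ((univ : Finset (Fin (2*n))).filter fun i => decide (i ∈ P.1 ∪ P.2) = true).card = n + 1 := by
      rw [hfilter, Finset.card_union_of_disjoint hdisj, hP1c, hP2c]
      omega
    have hinter : ((univ : Finset (Fin (2*n))).filter fun i => decide (i ∈ P.1 ∪ P.2) = true) ∩ B = P.1 := by
      rw [hfilter]
      ext i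
      rw [Finset.mem_inter, Finset.mem_union]
      constructor
      · rintro ⟨hi1 | hi2, hiB⟩
        · exact hi1
        · exact absurd hiB (by have := hP2 hi2; rw [Finset.mem_sdiff] at this; exact this.2)
      · intro hi
        exact ⟨Or.inl hi, hP1 hi⟩
    rw [Finset.mem_filter]
    refine ⟨Finset.mem_univ _, hAcard, ?_⟩
    have := key (fun i => decide (i ∈ P.1 ∪ P.2)) hAcard P.1.card (by rw [hinter])
    rw [this]
    exact hP1c ▸ rfl
  · -- left inverse
    intro a ha
    funext i
    by_cases h : a i = true
    · simp only [Finset.mem_union, Finset.mem_inter, Finset.mem_sdiff, Finset.mem_filter,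
        Finset.mem_univ, true_and, h]
      by_cases hB' : i ∈ B <;> simp [hB']
    · simp only [Finset.mem_union, Finset.mem_inter, Finset.mem_sdiff, Finset.mem_filter,
        Finset.mem_univ, true_and, h]
      simp only [Bool.not_eq_true] at h
      simp [h]
  · -- right inverse
    intro P hP
    rw [Finset.mem_product, Finset.mem_powersetCard, Finset.mem_powersetCard] at hP
    obtain ⟨⟨hP1, -⟩, hP2, -⟩ := hP
    have hfilter : ((univ : Finset (Fin (2*n))).filter fun i => decide (i ∈ P.1 ∪ P.2) = true) = P.1 ∪ P.2 := by
      ext i; simp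
    rw [hfilter]
    have e1 : (P.1 ∪ P.2) ∩ B = P.1 := by
      ext i
      rw [Finset.mem_inter, Finset.mem_union]
      constructor
      · rintro ⟨hi1 | hi2, hiB⟩
        · exact hi1
        · exact absurd hiB (by have := hP2 hi2; rw [Finset.mem_sdiff] at this; exact this.2)
      · intro hi
        exact ⟨Or.inl hi, hP1 hi⟩
    have e2 : (P.1 ∪ P.2) \ B = P.2 := by
      ext i
      rw [Finset.mem_sdiff, Finset.mem_union]
      constructor
      · rintro ⟨hi1 | hi2, hiB⟩
        · exact absurd (hP1 hi1) hiB
        · exact hi2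
      · intro hi
        have := hP2 hi
        rw [Finset.mem_sdiff] at this
        exact ⟨Or.inr hi, this.2⟩
    rw [e1, e2]

section Levels
variable {N : ℕ} [NeZero N]

lemma pf_even (g : Fin N → Bool) (i : ℕ) : Even (pf g i + (i : ℤ)) := ps_even _ i

def Good (f : Fin N → Bool × Bool) (j : ℕ) : Prop :=
  ∀ r, 1 ≤ r → r ≤ N →
    ¬(pf (fb f) (j + r) = pf (fb f) j ∧ pf (fa f) (j + r) ≤ pf (fa f) j)

lemma fa_rot (f : Fin N → Bool × Bool) (j : ℕ) : fa (rot j f) = rot j (fa f) := rfl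
lemma fb_rot (f : Fin N → Bool × Bool) (j : ℕ) : fb (rot j f) = rot j (fb f) := rfl

lemma slitP_rot_iff_good (f : Fin N → Bool × Bool) (j : ℕ) :
    slitP (rot j f) ↔ Good f j := by
  unfold slitP Good
  apply forall_congr'
  intro r
  have e1 : pf (fb (rot j f)) r = pf (fb f) (j + r) - pf (fb f) j := by
    rw [fb_rot, pf_rot]
  have e2 : pf (fa (rot j f)) r = pf (fa f) (j + r) - pf (fa f) j := by
    rw [fa_rot, pf_rot]
  rw [e1, e2]
  constructor
  · intro h h1 h2 hc
    exact h h1 h2 ⟨by omega, by omega⟩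
  · intro h h1 h2 hc
    exact h h1 h2 ⟨by omega, by omega⟩

lemma parity_step (f : Fin N → Bool × Bool) (u j : ℕ)
    (hY : pf (fb f) u = pf (fb f) j) : Even (pf (fa f) u - pf (fa f) j) := by
  have h1 := pf_even (fa f) u
  have h2 := pf_even (fa f) j
  have h3 := pf_even (fb f) u
  have h4 := pf_even (fb f) j
  rw [Int.even_iff] at h1 h2 h3 h4 ⊢
  omega

lemma good_iff (f : Fin N → Bool × Bool) (hX : pf (fa f) N = 2) (hY : pf (fb f) N = 0)
    (j : ℕ) (hj : j < N) :
    Good f j ↔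
      ((∀ u, u < N → j < u → pf (fb f) u = pf (fb f) j → pf (fa f) j < pf (fa f) u) ∧
       (∀ u, u < j → pf (fb f) u = pf (fb f) j → pf (fa f) j ≤ pf (fa f) u)) := by
  have hXper : ∀ t, pf (fa f) (t + N) = pf (fa f) t + 2 := by
    intro t; rw [pf_period, hX]
  have hYper : ∀ t, pf (fb f) (t + N) = pf (fb f) t := by
    intro t; rw [pf_period, hY, add_zero]
  constructor
  · intro hg
    constructor
    · intro u hu hju hYu
      have hr := hg (u - j) (by omega) (by omega)
      have hju' : j + (u - j) = u := by omega
      rw [hju'] at hr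
      by_contra hc
      exact hr ⟨hYu, by omega⟩
    · intro u huj hYu
      have hr := hg (u + N - j) (by omega) (by omega)
      have hju' : j + (u + N - j) = u + N := by omega
      rw [hju'] at hr
      rw [hXper u, hYper u] at hr
      have hev := parity_step f u j hYu
      rcases hev with ⟨k, hk⟩
      by_contra hc
      exact hr ⟨hYu, by omega⟩
  · rintro ⟨h1, h2⟩ r hr1 hr2 ⟨hYc, hXc⟩
    by_cases ht : j + r < N
    · exact absurd hXc (not_le.mpr (h1 (j + r) ht (by omega) hYc))
    · set u := j + r - N with hu
      have huj : u ≤ j := by omega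
      have huN : u + N = j + r := by omega
      rw [← huN, hYper u] at hYc
      rw [← huN, hXper u] at hXc
      rcases Nat.eq_or_lt_of_le huj with heq | hlt
      · rw [heq] at hXc
        omega
      · have := h2 u hlt hYc
        omega

def levels (g : Fin N → Bool) : Finset ℤ := (range N).image (fun j => pf g j)

lemma card_good_eq_levels (f : Fin N → Bool × Bool)
    (hX : pf (fa f) N = 2) (hY : pf (fb f) N = 0) :
    ((range N).filter fun j => Good f j).card = (levels (fb f)).card := by
  apply Finset.card_bij (i := fun j _ => pf (fb f) j)
  · intro j hj
    rw [Finset.mem_filter, Finset.mem_range] at hj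
    exact Finset.mem_image_of_mem _ (Finset.mem_range.mpr hj.1)
  · intro j1 hj1 j2 hj2 heq
    rw [Finset.mem_filter, Finset.mem_range] at hj1 hj2
    have g1 := (good_iff f hX hY j1 hj1.1).mp hj1.2
    have g2 := (good_iff f hX hY j2 hj2.1).mp hj2.2
    rcases lt_trichotomy j1 j2 with h | h | h
    · have a1 := g1.1 j2 hj2.1 h heq.symm
      have a2 := g2.2 j1 h heq
      omega
    · exact h
    · have a1 := g2.1 j1 hj1.1 h heq
      have a2 := g1.2 j2 h heq.symm
      omega
  · intro ℓ hℓ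
    rw [levels, Finset.mem_image] at hℓ
    obtain ⟨u, hu, rfl⟩ := hℓ
    rw [Finset.mem_range] at hu
    classical
    set C := (range N).filter (fun v => pf (fb f) v = pf (fb f) u) with hC
    have hCne : C.Nonempty := ⟨u, by simp [hC, Finset.mem_filter, Finset.mem_range, hu]⟩
    obtain ⟨u0, hu0C, hmin⟩ := Finset.exists_min_image C (fun v => pf (fa f) v) hCne
    set D := C.filter (fun v => pf (fa f) v = pf (fa f) u0) with hD
    have hDne : D.Nonempty := ⟨u0, by rw [hD, Finset.mem_filter]; exact ⟨hu0C, rfl⟩⟩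
    set j := D.max' hDne with hjdef
    have hjD : j ∈ D := Finset.max'_mem D hDne
    rw [hD, Finset.mem_filter] at hjD
    have hjC := hjD.1
    have hjX : pf (fa f) j = pf (fa f) u0 := hjD.2
    rw [hC, Finset.mem_filter, Finset.mem_range] at hjC
    have hjN : j < N := hjC.1
    have hjY : pf (fb f) j = pf (fb f) u := hjC.2
    refine ⟨j, ?_, hjY⟩
    rw [Finset.mem_filter, Finset.mem_range]
    refine ⟨hjN, (good_iff f hX hY j hjN).mpr ⟨?_, ?_⟩⟩
    · intro v hv hjv hYv
      have hvC : v ∈ C := by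
        rw [hC, Finset.mem_filter, Finset.mem_range]
        exact ⟨hv, by rw [hYv, hjY]⟩
      have hge := hmin v hvC
      rw [← hjX] at hge
      rcases lt_or_eq_of_le hge with h | h
      · exact h
      · exfalso
        have hvD : v ∈ D := by
          rw [hD, Finset.mem_filter]
          exact ⟨hvC, by rw [← h, hjX]⟩
        have := Finset.le_max' D v hvD
        omega
    · intro v hv hYv
      have hvC : v ∈ C := by
        rw [hC, Finset.mem_filter, Finset.mem_range]
        exact ⟨by omega, by rw [hYv, hjY]⟩
      have := hmin v hvC
      omega

lemma card_filter_fin (P : ℕ → Prop) :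
    ((univ : Finset (Fin N)).filter fun j => P j.val).card = ((range N).filter P).card := by
  apply Finset.card_bij (i := fun j _ => j.val)
  · intro j hj
    rw [Finset.mem_filter] at hj
    rw [Finset.mem_filter, Finset.mem_range]
    exact ⟨j.isLt, hj.2⟩
  · intro j1 _ j2 _ h
    exact Fin.ext h
  · intro a ha
    rw [Finset.mem_filter, Finset.mem_range] at ha
    exact ⟨⟨a, ha.1⟩, by rw [Finset.mem_filter]; exact ⟨Finset.mem_univ _, ha.2⟩, rfl⟩

end Levels

section Reflect
variable {N : ℕ} [NeZero N]

lemma pf_congr (g₁ g₂ : Fin N → Bool) (t : ℕ) (ht : t ≤ N)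
    (h : ∀ s : ℕ, ∀ hs : s < N, s < t → g₁ ⟨s, hs⟩ = g₂ ⟨s, hs⟩) : pf g₁ t = pf g₂ t := by
  unfold pf ps
  apply Finset.sum_congr rfl
  intro s hs
  rw [Finset.mem_range] at hs
  have hsN : s < N := lt_of_lt_of_le hs ht
  show sg (ex g₁ s) = sg (ex g₂ s)
  rw [ex_lt _ hsN, ex_lt _ hsN, h s hsN hs]

lemma pf_bound (g : Fin N → Bool) (j : ℕ) : -(j:ℤ) ≤ pf g j ∧ pf g j ≤ j := by
  constructor
  · have := le_ps_add (fun t => ex g t) 0 j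
    rw [zero_add] at this
    have h0 : ps (fun t => ex g t) 0 = 0 := ps_zero _
    unfold pf
    omega
  · have := ps_add_le (fun t => ex g t) 0 j
    rw [zero_add] at this
    have h0 : ps (fun t => ex g t) 0 = 0 := ps_zero _
    unfold pf
    omega

lemma pf_bound2 (g : Fin N → Bool) (j : ℕ) (hj : j ≤ N) :
    pf g N ≤ pf g j + (N - j : ℕ) ∧ pf g j - (N - j : ℕ) ≤ pf g N := by
  have h1 := ps_add_le (fun t => ex g t) j (N - j)
  have h2 := le_ps_add (fun t => ex g t) j (N - j)
  have hj' : j + (N - j) = N := by omega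
  rw [hj'] at h1 h2
  unfold pf
  exact ⟨h1, h2⟩

variable (ℓ : ℤ)

/-- First hitting time of level `ℓ`. -/
noncomputable def tau (b : Fin N → Bool) : ℕ :=
  if h : ∃ j, pf b j = ℓ then Nat.find h else 0

/-- Reflection: flip all steps from the first hitting time of `ℓ` on. -/
noncomputable def flp (b : Fin N → Bool) : Fin N → Bool :=
  fun i => if i.val < tau ℓ b then b i else !(b i)

lemma tau_spec (b : Fin N → Bool) (h : ∃ j, pf b j = ℓ) : pf b (tau ℓ b) = ℓ := by
  rw [tau, dif_pos h]
  exact Nat.find_spec h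

lemma tau_min (b : Fin N → Bool) (h : ∃ j, pf b j = ℓ) (t : ℕ) (ht : t < tau ℓ b) :
    pf b t ≠ ℓ := by
  rw [tau, dif_pos h] at ht
  exact Nat.find_min h ht

lemma tau_le (b : Fin N → Bool) (h : ∃ j, pf b j = ℓ) (t : ℕ) (ht : pf b t = ℓ) :
    tau ℓ b ≤ t := by
  rw [tau, dif_pos h]
  exact Nat.find_min' h ht

lemma pf_flp_le (b : Fin N → Bool) (t : ℕ) (ht : t ≤ tau ℓ b) (htN : t ≤ N) :
    pf (flp ℓ b) t = pf b t := by
  apply pf_congr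
  · exact htN
  · intro s hs hst
    have hcond : (⟨s, hs⟩ : Fin N).val < tau ℓ b := lt_of_lt_of_le hst ht
    show flp ℓ b ⟨s, hs⟩ = b ⟨s, hs⟩
    rw [flp, if_pos hcond]

lemma pf_flp_ge (b : Fin N → Bool) (h : ∃ j, pf b j = ℓ) (htau : tau ℓ b ≤ N) :
    ∀ d, tau ℓ b + d ≤ N → pf (flp ℓ b) (tau ℓ b + d) = 2*ℓ - pf b (tau ℓ b + d) := by
  intro d
  induction d with
  | zero =>
    intro _
    rw [add_zero, pf_flp_le ℓ b _ le_rfl htau, tau_spec ℓ b h]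
    ring
  | succ k ih =>
    intro hd
    have hk : tau ℓ b + k < N := by omega
    have e1 : tau ℓ b + (k+1) = (tau ℓ b + k) + 1 := by omega
    rw [e1]
    unfold pf
    rw [ps_succ, ps_succ]
    have e2 : ps (fun t => ex (flp ℓ b) t) (tau ℓ b + k) = 2*ℓ - ps (fun t => ex b t) (tau ℓ b + k) := ih (by omega)
    rw [e2, ex_lt _ hk, ex_lt _ hk]
    have hcond : ¬ ((⟨tau ℓ b + k, hk⟩ : Fin N).val < tau ℓ b) :=
      Nat.not_lt.mpr (Nat.le_add_right _ _)
    rw [flp, if_neg hcond, sg_not]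
    ring

lemma flp_flp (b : Fin N → Bool) (h : ∃ j, pf b j = ℓ) (htau : tau ℓ b ≤ N) :
    tau ℓ (flp ℓ b) = tau ℓ b ∧ flp ℓ (flp ℓ b) = b := by
  have hhit : pf (flp ℓ b) (tau ℓ b) = ℓ := by
    rw [pf_flp_le ℓ b _ le_rfl htau, tau_spec ℓ b h]
  have h' : ∃ j, pf (flp ℓ b) j = ℓ := ⟨tau ℓ b, hhit⟩
  have htt : tau ℓ (flp ℓ b) = tau ℓ b := by
    apply le_antisymm (tau_le ℓ _ h' _ hhit)
    by_contra hc
    push_neg at hc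
    have hlt : tau ℓ (flp ℓ b) < tau ℓ b := hc
    have := tau_spec ℓ (flp ℓ b) h'
    rw [pf_flp_le ℓ b _ (le_of_lt hlt) (by omega)] at this
    exact tau_min ℓ b h _ hlt this
  refine ⟨htt, ?_⟩
  funext i
  rw [flp, htt]
  by_cases hi : i.val < tau ℓ b
  · rw [if_pos hi, flp, if_pos hi]
  · rw [if_neg hi, flp, if_neg hi, Bool.not_not]

lemma reflect_card (hℓ : 1 ≤ ℓ) :
    ((univ : Finset (Fin N → Bool)).filter fun b => pf b N = 0 ∧ ∃ j < N, pf b j = ℓ).card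
      = ((univ : Finset (Fin N → Bool)).filter fun b => pf b N = 2*ℓ).card := by
  refine Finset.card_bij' (fun b _ => flp ℓ b) (fun b _ => flp ℓ b) ?hi ?hj ?left ?right
  case hi =>
    intro b hb
    rw [Finset.mem_filter] at hb
    obtain ⟨-, hb0, j, hjN, hjℓ⟩ := hb
    have h : ∃ j, pf b j = ℓ := ⟨j, hjℓ⟩
    have htau : tau ℓ b ≤ N := le_trans (tau_le ℓ b h j hjℓ) (by omega)
    rw [Finset.mem_filter]
    refine ⟨Finset.mem_univ _, ?_⟩
    have := pf_flp_ge ℓ b h htau (N - tau ℓ b) (by omega)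
    rw [show tau ℓ b + (N - tau ℓ b) = N by omega] at this
    rw [this, hb0]
    ring
  case hj =>
    intro b hb
    rw [Finset.mem_filter] at hb
    obtain ⟨-, hb2⟩ := hb
    have hIVT : ∃ j ≤ N, pf b j = ℓ := by
      apply ivt (fun t => ex b t) ℓ
      · rw [ps_zero]; omega
      · show ℓ ≤ pf b N
        rw [hb2]; omega
    obtain ⟨j, hjN, hjℓ⟩ := hIVT
    have h : ∃ j, pf b j = ℓ := ⟨j, hjℓ⟩
    have htau : tau ℓ b ≤ N := le_trans (tau_le ℓ b h j hjℓ) hjN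
    have htauN : tau ℓ b < N := by
      rcases Nat.eq_or_lt_of_le htau with heq | hlt
      · exfalso
        have := tau_spec ℓ b h
        rw [heq, hb2] at this
        omega
      · exact hlt
    rw [Finset.mem_filter]
    refine ⟨Finset.mem_univ _, ?_, ?_⟩
    · have := pf_flp_ge ℓ b h htau (N - tau ℓ b) (by omega)
      rw [show tau ℓ b + (N - tau ℓ b) = N by omega] at this
      rw [this, hb2]
      ring
    · refine ⟨tau ℓ b, htauN, ?_⟩
      rw [pf_flp_le ℓ b _ le_rfl htau, tau_spec ℓ b h]
  case left =>
    intro b hb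
    rw [Finset.mem_filter] at hb
    obtain ⟨-, hb0, j, hjN, hjℓ⟩ := hb
    have h : ∃ j, pf b j = ℓ := ⟨j, hjℓ⟩
    have htau : tau ℓ b ≤ N := le_trans (tau_le ℓ b h j hjℓ) (by omega)
    exact (flp_flp ℓ b h htau).2
  case right =>
    intro b hb
    rw [Finset.mem_filter] at hb
    obtain ⟨-, hb2⟩ := hb
    have hIVT : ∃ j ≤ N, pf b j = ℓ := by
      apply ivt (fun t => ex b t) ℓ
      · rw [ps_zero]; omega
      · show ℓ ≤ pf b N
        rw [hb2]; omega
    obtain ⟨j, hjN, hjℓ⟩ := hIVT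
    have h : ∃ j, pf b j = ℓ := ⟨j, hjℓ⟩
    have htau : tau ℓ b ≤ N := le_trans (tau_le ℓ b h j hjℓ) hjN
    exact (flp_flp ℓ b h htau).2

lemma pf_not (b : Fin N → Bool) (t : ℕ) : pf (fun i => !(b i)) t = - pf b t := by
  have : (fun s => ex (fun i => !(b i)) s) = fun s => !(ex b s) := by
    funext s; rfl
  unfold pf
  rw [this, ps_neg]

lemma card_hit_neg :
    ((univ : Finset (Fin N → Bool)).filter fun b => pf b N = 0 ∧ ∃ j < N, pf b j = ℓ).card
      = ((univ : Finset (Fin N → Bool)).filter fun b => pf b N = 0 ∧ ∃ j < N, pf b j = -ℓ).card := by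
  apply Finset.card_bij' (i := fun b _ => fun i => !(b i)) (j := fun b _ => fun i => !(b i))
  · intro b hb
    rw [Finset.mem_filter] at hb ⊢
    obtain ⟨-, hb0, j, hjN, hjℓ⟩ := hb
    exact ⟨Finset.mem_univ _, by rw [pf_not, hb0]; ring, j, hjN, by rw [pf_not, hjℓ]⟩
  · intro b hb
    rw [Finset.mem_filter] at hb ⊢
    obtain ⟨-, hb0, j, hjN, hjℓ⟩ := hb
    exact ⟨Finset.mem_univ _, by rw [pf_not, hb0]; ring, j, hjN, by rw [pf_not, hjℓ]; ring⟩
  · intro b _; funext i; simp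
  · intro b _; funext i; simp

end Reflect

section BridgeSum
variable {N : ℕ} [NeZero N]

lemma levels_subset_Icc (n : ℕ) (hN : N = 2*n) (b : Fin N → Bool) (hb : pf b N = 0) :
    levels b ⊆ Finset.Icc (-(n:ℤ)) n := by
  intro ℓ hℓ
  rw [levels, Finset.mem_image] at hℓ
  obtain ⟨j, hj, rfl⟩ := hℓ
  rw [Finset.mem_range] at hj
  have h1 := pf_bound b j
  have h2 := pf_bound2 b j (by omega)
  rw [Finset.mem_Icc]
  have hc : ((N - j : ℕ) : ℤ) = (N : ℤ) - j := by
    have : j ≤ N := by omega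
    omega
  rw [hc] at h2
  have hNn : (N : ℤ) = 2*n := by rw [hN]; push_cast; ring
  omega

lemma card_bridges (n : ℕ) (hN : N = 2*n) :
    ((univ : Finset (Fin N → Bool)).filter fun b => pf b N = 0).card = N.choose n := by
  have : ∀ b : Fin N → Bool, (pf b N = 0) ↔ ((univ : Finset (Fin N)).filter fun i => b i).card = n := by
    intro b
    rw [pf_N_eq]
    constructor
    · intro h
      have hNn : (N : ℤ) = 2*n := by rw [hN]; push_cast; ring
      omega
    · intro h
      rw [h]
      have hNn : (N : ℤ) = 2*n := by rw [hN]; push_cast; ring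
      omega
  rw [Finset.filter_congr (fun b _ => this b)]
  exact card_bool_funs N n

lemma card_hit (n : ℕ) (hN : N = 2*n) (ℓ : ℤ) (hℓ : ℓ ∈ Finset.Icc (-(n:ℤ)) n) :
    (((univ : Finset (Fin N → Bool)).filter fun b => pf b N = 0).filter
        fun b => ℓ ∈ levels b).card = (2*n).choose ((n : ℤ) + ℓ).toNat := by
  rw [Finset.mem_Icc] at hℓ
  rw [Finset.filter_filter]
  have hmem : ∀ b : Fin N → Bool, (ℓ ∈ levels b) ↔ (∃ j < N, pf b j = ℓ) := by
    intro b
    rw [levels, Finset.mem_image]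
    constructor
    · rintro ⟨j, hj, hje⟩
      exact ⟨j, Finset.mem_range.mp hj, hje⟩
    · rintro ⟨j, hj, hje⟩
      exact ⟨j, Finset.mem_range.mpr hj, hje⟩
  -- the case ℓ ≥ 1 as an auxiliary statement
  have hpos : ∀ ℓ' : ℤ, 1 ≤ ℓ' → ℓ' ≤ n →
      ((univ : Finset (Fin N → Bool)).filter fun b => pf b N = 0 ∧ ∃ j < N, pf b j = ℓ').card
        = (2*n).choose ((n : ℤ) + ℓ').toNat := by
    intro ℓ' h1 h2
    rw [reflect_card ℓ' h1]
    have : ∀ b : Fin N → Bool, (pf b N = 2*ℓ') ↔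
        ((univ : Finset (Fin N)).filter fun i => b i).card = ((n : ℤ) + ℓ').toNat := by
      intro b
      rw [pf_N_eq]
      have hNn : (N : ℤ) = 2*n := by rw [hN]; push_cast; ring
      omega
    rw [Finset.filter_congr (fun b _ => this b)]
    rw [card_bool_funs N (((n : ℤ) + ℓ').toNat), hN]
  rcases lt_trichotomy ℓ 0 with hneg | hzero | hposs
  · -- ℓ < 0
    have e1 : ∀ b : Fin N → Bool, (pf b N = 0 ∧ ℓ ∈ levels b) ↔ (pf b N = 0 ∧ ∃ j < N, pf b j = ℓ) := by
      intro b; rw [hmem b]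
    rw [Finset.filter_congr (fun b _ => e1 b)]
    rw [card_hit_neg ℓ]
    rw [hpos (-ℓ) (by omega) (by omega)]
    have h1 : ((n : ℤ) + -ℓ).toNat = 2*n - ((n : ℤ) + ℓ).toNat := by omega
    have h2 : ((n : ℤ) + ℓ).toNat ≤ 2*n := by omega
    rw [h1, Nat.choose_symm h2]
  · -- ℓ = 0
    subst hzero
    have e1 : ∀ b ∈ (univ : Finset (Fin N → Bool)), (pf b N = 0 ∧ (0:ℤ) ∈ levels b) ↔ (pf b N = 0) := by
      intro b _
      constructor
      · exact fun h => h.1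
      · intro h
        refine ⟨h, ?_⟩
        rw [levels, Finset.mem_image]
        refine ⟨0, Finset.mem_range.mpr (Nat.pos_of_ne_zero (NeZero.ne N)), ?_⟩
        exact ps_zero _
    rw [Finset.filter_congr e1, card_bridges n hN]
    simp [hN]
  · -- ℓ > 0
    have e1 : ∀ b : Fin N → Bool, (pf b N = 0 ∧ ℓ ∈ levels b) ↔ (pf b N = 0 ∧ ∃ j < N, pf b j = ℓ) := by
      intro b; rw [hmem b]
    rw [Finset.filter_congr (fun b _ => e1 b)]
    exact hpos ℓ (by omega) (by omega)

lemma bridge_sum (n : ℕ) (hN : N = 2*n) :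
    ∑ b ∈ ((univ : Finset (Fin N → Bool)).filter fun b => pf b N = 0), (levels b).card
      = 4 ^ n := by
  have step1 : ∀ b : Fin N → Bool, pf b N = 0 →
      (levels b).card = ∑ ℓ ∈ Finset.Icc (-(n:ℤ)) n, if ℓ ∈ levels b then 1 else 0 := by
    intro b hb
    rw [← Finset.card_filter]
    congr 1
    rw [Finset.filter_mem_eq_inter]
    exact (Finset.inter_eq_right.mpr (levels_subset_Icc n hN b hb)).symm
  rw [Finset.sum_congr rfl (fun b hb => step1 b (Finset.mem_filter.mp hb).2)]
  rw [Finset.sum_comm]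
  have step2 : ∀ ℓ ∈ Finset.Icc (-(n:ℤ)) n,
      (∑ b ∈ ((univ : Finset (Fin N → Bool)).filter fun b => pf b N = 0),
        if ℓ ∈ levels b then 1 else 0) = (2*n).choose ((n : ℤ) + ℓ).toNat := by
    intro ℓ hℓ
    rw [← Finset.card_filter]
    exact card_hit n hN ℓ hℓ
  rw [Finset.sum_congr rfl step2]
  have step3 : ∑ ℓ ∈ Finset.Icc (-(n:ℤ)) n, (2*n).choose ((n : ℤ) + ℓ).toNat
      = ∑ k ∈ Finset.range (2*n+1), (2*n).choose k := by
    apply Finset.sum_nbij' (i := fun ℓ => ((n : ℤ) + ℓ).toNat) (j := fun k => (k : ℤ) - n)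
    · intro ℓ hℓ
      rw [Finset.mem_Icc] at hℓ
      rw [Finset.mem_range]
      omega
    · intro k hk
      rw [Finset.mem_range] at hk
      rw [Finset.mem_Icc]
      omega
    · intro ℓ hℓ
      rw [Finset.mem_Icc] at hℓ
      omega
    · intro k hk
      rw [Finset.mem_range] at hk
      omega
    · intro ℓ _
      rfl
  rw [step3, Nat.sum_range_choose]
  rw [show (4:ℕ) = 2^2 from rfl, ← pow_mul]

end BridgeSum

section Master
variable {N : ℕ} [NeZero N]

lemma pf_rot_N (g : Fin N → Bool) (j : ℕ) : pf (rot j g) N = pf g N := by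
  rw [pf_rot]
  have := pf_period g j
  omega

def prd (p : (Fin N → Bool) × (Fin N → Bool)) : Fin N → Bool × Bool := fun i => (p.1 i, p.2 i)

lemma master (n : ℕ) (hN : N = 2*n) (R : (Fin N → Bool × Bool) → Prop) (c : ℕ)
    (hrot : ∀ (j : ℕ) (f : Fin N → Bool × Bool), R (rot j f) ↔ R f)
    (hc : ∀ b : Fin N → Bool, ((univ : Finset (Fin N)).filter fun i => b i).card = n →
       ((univ : Finset (Fin N → Bool)).filter fun a =>
          ((univ : Finset (Fin N)).filter fun i => a i).card = n + 1 ∧ R (prd (a, b))).card = c) :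
    N * ((univ : Finset (Fin N → Bool × Bool)).filter fun f =>
        pf (fa f) N = 2 ∧ pf (fb f) N = 0 ∧ slitP f ∧ R f).card = c * 4 ^ n := by
  have hNn : (N : ℤ) = 2*n := by rw [hN]; push_cast; ring
  set P : (Fin N → Bool × Bool) → Prop := fun f => pf (fa f) N = 2 ∧ pf (fb f) N = 0 ∧ R f
    with hP
  set T := (univ : Finset ((Fin N → Bool × Bool) × Fin N)).filter
      (fun p => P p.1 ∧ slitP (rot p.2.val p.1)) with hT
  -- base invariance under rotation
  have hPinv : ∀ (j : ℕ) (f : Fin N → Bool × Bool), P (rot j f) ↔ P f := by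
    intro j f
    rw [hP]
    simp only []
    rw [fa_rot, fb_rot, pf_rot_N, pf_rot_N, hrot]
  -- first count
  have count1 : T.card = N * ((univ : Finset (Fin N → Bool × Bool)).filter
      fun f => P f ∧ slitP f).card := by
    rw [Finset.card_eq_sum_card_fiberwise (f := Prod.snd) (t := univ) (fun x _ => Finset.mem_univ _)]
    have hfib : ∀ j : Fin N, (T.filter fun p => p.2 = j).card
        = ((univ : Finset (Fin N → Bool × Bool)).filter fun f => P f ∧ slitP f).card := by
      intro j
      have e1 : (T.filter fun p => p.2 = j).card
          = ((univ : Finset (Fin N → Bool × Bool)).filter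
              fun f => P f ∧ slitP (rot j.val f)).card := by
        refine Finset.card_bij' (fun p _ => p.1) (fun f _ => (f, j)) ?hi ?hj ?left ?right
        case hi =>
          intro p hp
          rw [Finset.mem_filter] at hp
          obtain ⟨hpT, hpj⟩ := hp
          rw [hT, Finset.mem_filter] at hpT
          rw [Finset.mem_filter]
          refine ⟨Finset.mem_univ _, hpT.2.1, ?_⟩
          show slitP (rot (↑j) p.1)
          rw [← hpj]
          exact hpT.2.2
        case hj =>
          intro f hf
          rw [Finset.mem_filter] at hf
          rw [Finset.mem_filter, hT, Finset.mem_filter]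
          exact ⟨⟨Finset.mem_univ _, hf.2.1, hf.2.2⟩, rfl⟩
        case left =>
          intro p hp
          rw [Finset.mem_filter] at hp
          show (p.1, j) = p
          rw [← hp.2]
        case right =>
          intro f _
          rfl
      rw [e1]
      refine Finset.card_bij' (fun f _ => rot j.val f) (fun g _ => rot (N - j.val) g) ?hi ?hj ?left ?right
      case hi =>
        intro f hf
        rw [Finset.mem_filter] at hf ⊢
        exact ⟨Finset.mem_univ _, (hPinv _ _).mpr hf.2.1, hf.2.2⟩
      case hj =>
        intro g hg
        rw [Finset.mem_filter] at hg ⊢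
        refine ⟨Finset.mem_univ _, (hPinv _ _).mpr hg.2.1, ?_⟩
        rw [rot_rot, show j.val + (N - j.val) = N from by have := j.isLt; omega, rot_N]
        exact hg.2.2
      case left =>
        intro f _
        show rot (N - j.val) (rot j.val f) = f
        rw [rot_rot, show (N - j.val) + j.val = N from by have := j.isLt; omega, rot_N]
      case right =>
        intro g _
        show rot j.val (rot (N - j.val) g) = g
        rw [rot_rot, show j.val + (N - j.val) = N from by have := j.isLt; omega, rot_N]
    rw [Finset.sum_congr rfl (fun j _ => hfib j)]
    rw [Finset.sum_const, card_univ, Fintype.card_fin, smul_eq_mul]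
  -- second count
  have count2 : T.card = ∑ f ∈ ((univ : Finset (Fin N → Bool × Bool)).filter P),
      (levels (fb f)).card := by
    rw [Finset.card_eq_sum_card_fiberwise (f := Prod.fst)
      (t := (univ : Finset (Fin N → Bool × Bool)).filter P)
      (fun p hp => by
        rw [hT, Finset.mem_coe, Finset.mem_filter] at hp
        rw [Finset.mem_coe, Finset.mem_filter]
        exact ⟨Finset.mem_univ _, hp.2.1⟩)]
    apply Finset.sum_congr rfl
    intro f hf
    rw [Finset.mem_filter] at hf
    have e1 : (T.filter fun p => p.1 = f).card
        = ((univ : Finset (Fin N)).filter fun j => slitP (rot j.val f)).card := by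
      refine Finset.card_bij' (fun p _ => p.2) (fun j _ => (f, j)) ?hi ?hj ?left ?right
      case hi =>
        intro p hp
        rw [Finset.mem_filter] at hp
        obtain ⟨hpT, hpf⟩ := hp
        rw [hT, Finset.mem_filter] at hpT
        rw [Finset.mem_filter]
        refine ⟨Finset.mem_univ _, ?_⟩
        show slitP (rot (↑p.2) f)
        rw [← hpf]
        exact hpT.2.2
      case hj =>
        intro j hj
        rw [Finset.mem_filter] at hj
        rw [Finset.mem_filter, hT, Finset.mem_filter]
        exact ⟨⟨Finset.mem_univ _, hf.2, hj.2⟩, rfl⟩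
      case left =>
        intro p hp
        rw [Finset.mem_filter] at hp
        show (f, p.2) = p
        rw [← hp.2]
      case right =>
        intro j _
        rfl
    rw [e1]
    have e2 : ∀ j : Fin N, (slitP (rot j.val f)) ↔ Good f j.val := fun j => slitP_rot_iff_good f j.val
    rw [Finset.filter_congr (fun j _ => e2 j)]
    rw [card_filter_fin (P := Good f)]
    exact card_good_eq_levels f hf.2.1 hf.2.2.1
  -- pair decomposition of the second count
  have count3 : ∑ f ∈ ((univ : Finset (Fin N → Bool × Bool)).filter P),
      (levels (fb f)).card = c * 4 ^ n := by
    have e1 : ∑ f ∈ ((univ : Finset (Fin N → Bool × Bool)).filter P), (levels (fb f)).card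
        = ∑ p ∈ ((univ : Finset ((Fin N → Bool) × (Fin N → Bool))).filter fun p => P (prd p)),
            (levels p.2).card := by
      refine Finset.sum_nbij' (fun f => (fa f, fb f)) (fun p => prd p) ?hi ?hj ?left ?right ?heq
      case hi =>
        intro f hf
        rw [Finset.mem_filter] at hf ⊢
        exact ⟨Finset.mem_univ _, hf.2⟩
      case hj =>
        intro p hp
        rw [Finset.mem_filter] at hp ⊢
        exact ⟨Finset.mem_univ _, hp.2⟩
      case left =>
        intro f _
        rfl
      case right =>
        intro p _
        rfl
      case heq =>
        intro f _
        rfl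
    rw [e1]
    rw [← Finset.univ_product_univ, Finset.sum_filter, Finset.sum_product, Finset.sum_comm]
    have hin : ∀ b : Fin N → Bool,
        (∑ a : Fin N → Bool, if P (prd (a, b)) then (levels b).card else 0)
          = if pf b N = 0 then c * (levels b).card else 0 := by
      intro b
      have hfb : ∀ a, pf (fb (prd (a, b))) N = pf b N := fun a => rfl
      by_cases h0 : pf b N = 0
      · rw [if_pos h0]
        have hbcard : ((univ : Finset (Fin N)).filter fun i => b i).card = n := by
          have := pf_N_eq b
          omega
        have hcond : ∀ a : Fin N → Bool, (P (prd (a, b))) ↔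
            (((univ : Finset (Fin N)).filter fun i => a i).card = n + 1 ∧ R (prd (a, b))) := by
          intro a
          have hfa : pf (fa (prd (a, b))) N = pf a N := rfl
          have hiff : pf a N = 2 ↔ ((univ : Finset (Fin N)).filter fun i => a i).card = n + 1 := by
            rw [pf_N_eq]; omega
          rw [hP]
          constructor
          · rintro ⟨h1, -, h3⟩
            rw [hfa] at h1
            exact ⟨hiff.mp h1, h3⟩
          · rintro ⟨h1, h2⟩
            refine ⟨?_, ?_, h2⟩
            · rw [hfa]; exact hiff.mpr h1
            · rw [hfb a]; exact h0
        rw [Finset.sum_congr rfl (fun a (_ : a ∈ univ) => if_congr (hcond a) rfl rfl)]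
        rw [← Finset.sum_filter, Finset.sum_const, smul_eq_mul]
        rw [hc b hbcard]
      · rw [if_neg h0]
        apply Finset.sum_eq_zero
        intro a _
        rw [if_neg]
        intro hPc
        rw [hP] at hPc
        exact h0 (by rw [← hfb a]; exact hPc.2.1)
    rw [Finset.sum_congr rfl (fun b (_ : b ∈ univ) => hin b)]
    rw [← Finset.sum_filter, ← Finset.mul_sum]
    rw [bridge_sum n hN]
  -- assemble
  have hfinal : ∀ f : Fin N → Bool × Bool,
      (pf (fa f) N = 2 ∧ pf (fb f) N = 0 ∧ slitP f ∧ R f) ↔ (P f ∧ slitP f) := by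
    intro f
    rw [hP]
    tauto
  rw [Finset.filter_congr (fun f (_ : f ∈ univ) => hfinal f)]
  rw [← count1, count2, count3]

end Master

section Final
variable {N : ℕ} [NeZero N]

lemma cnt_eq_sum (f : Fin N → Bool × Bool) :
    cnt f = ∑ t ∈ range N, (if (ex f t).1 = (ex f t).2 then 1 else 0) := by
  rw [cnt, card_filter]
  rw [← Fin.sum_univ_eq_sum_range (fun t => if (ex f t).1 = (ex f t).2 then 1 else 0) N]
  apply Finset.sum_congr rfl
  intro i _
  rw [ex_fin]

lemma cnt_rot (j : ℕ) (f : Fin N → Bool × Bool) : cnt (rot j f) = cnt f := by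
  rw [cnt_eq_sum, cnt_eq_sum]
  have e1 : ∀ t, ex (rot j f) t = ex f (t + j) := ex_rot j f
  rw [Finset.sum_congr rfl (fun t (_ : t ∈ range N) => by rw [e1 t])]
  exact sum_window (fun t => if (ex f t).1 = (ex f t).2 then 1 else 0) N
    (fun t => by
      show (if (ex f (t + N)).1 = (ex f (t + N)).2 then 1 else 0)
          = (if (ex f t).1 = (ex f t).2 then 1 else 0)
      rw [ex_per]) j

end Final

lemma card_filter_ext {α : Type*} [Fintype α] (p q : α → Prop) [DecidablePred p] [DecidablePred q]
    (h : ∀ x, p x ↔ q x) :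
    ((univ : Finset α).filter p).card = ((univ : Finset α).filter q).card := by
  apply congrArg Finset.card
  ext x
  simp only [Finset.mem_filter, Finset.mem_univ, true_and]
  exact h x

lemma part1_arith (n A : ℕ) (hn : 1 ≤ n)
    (hE : 2*n * A = (2*n).choose (n+1) * 4 ^ n) : 2 * A = 4 ^ n * catalan n := by
  have hch : ((2*n).choose (n+1)) * (n+1) = ((2*n).choose n) * n := by
    have := Nat.choose_succ_right_eq (2*n) n
    rw [this, show 2*n - n = n from by omega]
  have hcat : (n+1) * catalan n = (2*n).choose n := by
    rw [succ_mul_catalan_eq_centralBinom]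
    rfl
  have key : (n*(n+1)) * (2 * A) = (n*(n+1)) * (4 ^ n * catalan n) := by
    calc (n*(n+1)) * (2 * A) = (n+1) * (2*n * A) := by ring
      _ = (n+1) * ((2*n).choose (n+1) * 4 ^ n) := by rw [hE]
      _ = ((2*n).choose (n+1) * (n+1)) * 4 ^ n := by ring
      _ = ((2*n).choose n * n) * 4 ^ n := by rw [hch]
      _ = n * ((n+1) * catalan n) * 4 ^ n := by rw [hcat]; ring
      _ = (n*(n+1)) * (4 ^ n * catalan n) := by ring
  exact Nat.eq_of_mul_eq_mul_left (by positivity) key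



/-- on the diagonal square lattice, twice the number of walks of length
`2n` on the slit plane ending at `(2,0)` is `4^n C_n`; and `2n` times the number of
those with exactly `2m-1` steps in `{(1,1), (-1,-1)}` is `4^n C(n,m) C(n,m-1)`. -/
theorem statement5 (n m : ℕ) (hn : 1 ≤ n) (hm1 : 1 ≤ m) (hmn : m ≤ n) :
    2 * slitCount Sdiag (2 * n) (2, 0) = 4 ^ n * catalan n ∧
    2 * n * slitDiagCount (2 * n) (2 * m - 1)
      = 4 ^ n * Nat.choose n m * Nat.choose n (m - 1) := by
  haveI : NeZero (2 * n) := ⟨by omega⟩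
  constructor
  · -- Part 1
    have h0 : slitCount Sdiag (2*n) (2, 0)
        = {l : List Pt | l.length = 2*n ∧ StepsIn Sdiag l ∧ (AvoidsH l ∧ l.sum = (2, 0))}.ncard := rfl
    have h2 : ∀ f : Fin (2*n) → Bool × Bool,
        (AvoidsH (wd f) ∧ (wd f).sum = (2, 0)) ↔
        (pf (fa f) (2*n) = 2 ∧ pf (fb f) (2*n) = 0 ∧ slitP f ∧
          (fun (_ : Fin (2*n) → Bool × Bool) => True) f) := by
      intro f
      rw [avoids_wd, sum_wd, Prod.mk.injEq]
      tauto
    rw [h0, ncard_eq_card_filter' (2*n) (fun l => AvoidsH l ∧ l.sum = (2, 0))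
      (fun f => pf (fa f) (2*n) = 2 ∧ pf (fb f) (2*n) = 0 ∧ slitP f ∧
        (fun (_ : Fin (2*n) → Bool × Bool) => True) f) h2]
    have E1 := master (N := 2*n) n rfl (fun _ => True) ((2*n).choose (n+1))
      (fun j f => Iff.rfl)
      (fun b hb => by
        have hthis : ∀ a : Fin (2*n) → Bool,
            (((univ : Finset (Fin (2*n))).filter fun i => a i).card = n + 1 ∧
              (fun (_ : Fin (2*n) → Bool × Bool) => True) (prd (a, b))) ↔
            (((univ : Finset (Fin (2*n))).filter fun i => a i).card = n + 1) := by
          intro a; tauto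
        simp only [Finset.filter_congr_decidable, and_true]
        exact card_bool_funs (2*n) (n+1))
    refine part1_arith n _ hn ?_
    refine Eq.trans ?_ E1
    congr 1
    congr 1
    ext f
    simp only [Finset.mem_filter, Finset.mem_univ, true_and, and_true]
  · -- Part 2
    have h0 : slitDiagCount (2*n) (2*m-1)
        = {l : List Pt | l.length = 2*n ∧ StepsIn Sdiag l ∧ (AvoidsH l ∧ l.sum = (2, 0) ∧
            l.countP (fun s => s = (1, 1) ∨ s = (-1, -1)) = 2*m-1)}.ncard := rfl
    have h2 : ∀ f : Fin (2*n) → Bool × Bool,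
        (AvoidsH (wd f) ∧ (wd f).sum = (2, 0) ∧
            (wd f).countP (fun s => s = (1, 1) ∨ s = (-1, -1)) = 2*m-1) ↔
        (pf (fa f) (2*n) = 2 ∧ pf (fb f) (2*n) = 0 ∧ slitP f ∧
          (fun f => cnt f = 2*m-1) f) := by
      intro f
      rw [avoids_wd, sum_wd, Prod.mk.injEq]
      have hcnt : (wd f).countP (fun s => s = (1, 1) ∨ s = (-1, -1)) = cnt f := cnt_wd f
      rw [hcnt]
      tauto
    rw [h0, ncard_eq_card_filter' (2*n) (fun l => AvoidsH l ∧ l.sum = (2, 0) ∧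
        l.countP (fun s => s = (1, 1) ∨ s = (-1, -1)) = 2*m-1)
      (fun f => pf (fa f) (2*n) = 2 ∧ pf (fb f) (2*n) = 0 ∧ slitP f ∧
        (fun f => cnt f = 2*m-1) f) h2]
    have E2 := master (N := 2*n) n rfl (fun f => cnt f = 2*m-1) (n.choose m * n.choose (m-1))
      (fun j f => by
        show cnt (rot j f) = 2*m-1 ↔ cnt f = 2*m-1
        rw [cnt_rot])
      (fun b hb => by
        have hthis : ∀ a : Fin (2*n) → Bool,
            (((univ : Finset (Fin (2*n))).filter fun i => a i).card = n + 1 ∧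
              (fun f => cnt f = 2*m-1) (prd (a, b))) ↔
            (((univ : Finset (Fin (2*n))).filter fun i => a i).card = n + 1 ∧
              ((univ : Finset (Fin (2*n))).filter fun i => a i = b i).card = 2*m-1) :=
          fun a => Iff.rfl
        clear hthis
        have hgoal : ∀ a : Fin (2*n) → Bool, (cnt (prd (a, b)) = 2*m-1) ↔
            (((univ : Finset (Fin (2*n))).filter fun i => a i = b i).card = 2*m-1) :=
          fun a => Iff.rfl
        refine Eq.trans ?_ (card_inter_funs n m hm1 hmn b hb)
        apply congrArg Finset.card
        ext a
        simp only [Finset.mem_filter, Finset.mem_univ, true_and]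
        rw [hgoal a])
    refine Eq.trans ?_ (E2.trans (by ring))
    congr 1
    congr 1
    ext f
    simp only [Finset.mem_filter, Finset.mem_univ, true_and]


end SlitPlane
end

section
/- Let S be a finite subset of Z^2 and let S-bar = {(-i,-j) : (i,j) in S} be the reversed step set. Let S_0(x;t) in Q[x,x^{-1}][[t]] be the generating function for bilateral walks on the slit plane with steps in S, let S-bar_0(x;t) be the analogous generating function for steps in S-bar, let L(t) in Q[[t]] be the generating function for loops with steps in S, and let B(x;t) be the generating function for bilateral walks with steps in S. Then, in Q[x,x^{-1}][[t]], S-bar_0(x^{-1};t) * L(t) * S_0(x;t) = B(x;t). -/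
/-! Cut a bilateral walk at the first and at the last visit to its leftmost vertex on the x-axis.
This splits it, uniquely, into a prefix reaching that vertex strictly to the left of all its
earlier axis vertices, a loop based at that vertex, and a slit-plane walk starting from it; and
every such triple glues back to a bilateral walk. Read backwards from its endpoint, the prefix
is a slit-plane walk with steps in `S̄`, which accounts for the factor `S̄₀(x⁻¹)`. -/

open scoped Classical
open PowerSeries

namespace SlitPlane

/-- The reversed step set `S̄ = {(-i,-j) : (i,j) ∈ S}`. -/
def revSteps (S : Finset Pt) : Finset Pt := S.image (fun s => (-s.1, -s.2))

lemma vert_zero (l : List Pt) : vert l 0 = 0 := by simp [vert]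

lemma vert_append_of_le {l₁ : List Pt} (l₂ : List Pt) {j : ℕ} (h : j ≤ l₁.length) :
    vert (l₁ ++ l₂) j = vert l₁ j := by
  simp [vert, List.take_append_of_le_length h]

lemma vert_append_add (l₁ l₂ : List Pt) (j : ℕ) :
    vert (l₁ ++ l₂) (l₁.length + j) = l₁.sum + vert l₂ j := by
  simp [vert, List.take_append, List.take_of_length_le]

lemma exists_eq_append_length_eq (l : List Pt) {k : ℕ} (hk : k ≤ l.length) :
    ∃ l₁ l₂, l = l₁ ++ l₂ ∧ l₁.length = k :=
  ⟨l.take k, l.drop k, (List.take_append_drop k l).symm, List.length_take_of_le hk⟩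

def reverseWalk (l : List Pt) : List Pt := (l.map fun s => -s).reverse

lemma reverseWalk_involutive : Function.Involutive reverseWalk := by
  intro l
  simp [reverseWalk, List.map_reverse]

@[simp] lemma length_reverseWalk (l : List Pt) : (reverseWalk l).length = l.length := by
  simp [reverseWalk]

@[simp] lemma sum_reverseWalk (l : List Pt) : (reverseWalk l).sum = -l.sum :=
  (List.sum_neg_reverse l).symm

lemma vert_reverseWalk (l : List Pt) (j : ℕ) :
    vert (reverseWalk l) j = vert l (l.length - j) - l.sum := by
  have htake : (reverseWalk l).take j = reverseWalk (l.drop (l.length - j)) := by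
    rw [reverseWalk, List.take_reverse, List.length_map, ← List.map_drop, reverseWalk]
  have hsplit := List.sum_take_add_sum_drop l (l.length - j)
  rw [vert, htake, sum_reverseWalk, vert, ← hsplit]
  abel

lemma mem_revSteps {S : Finset Pt} {s : Pt} : s ∈ revSteps S ↔ -s ∈ S := by
  constructor
  · simp only [revSteps, Finset.mem_image]
    rintro ⟨t, ht, rfl⟩
    simpa using ht
  · intro h
    exact Finset.mem_image.mpr ⟨-s, h, by simp⟩

lemma stepsIn_revSteps_reverseWalk {S : Finset Pt} {l : List Pt} :
    StepsIn (revSteps S) (reverseWalk l) ↔ StepsIn S l := by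
  simp only [StepsIn, reverseWalk, List.mem_reverse, List.forall_mem_map, mem_revSteps, neg_neg]

lemma avoidsH_reverseWalk_iff {l : List Pt} (hl : l.sum.2 = 0) :
    AvoidsH (reverseWalk l) ↔ ∀ j < l.length, (vert l j).2 = 0 → l.sum.1 < (vert l j).1 := by
  simp only [AvoidsH, length_reverseWalk, OnH, not_and, not_le]
  constructor
  · intro h j hj hy
    have := h (l.length - j) (by omega) (by omega)
    rw [vert_reverseWalk l, Nat.sub_sub_self hj.le] at this
    simpa [hl, hy] using this
  · intro h j hj1 hj2 hy
    rw [vert_reverseWalk l] at hy ⊢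
    have := h (l.length - j) (by omega) (by simpa [hl] using hy)
    simp only [Prod.fst_sub]
    omega

def IsSlitBilateral (l : List Pt) : Prop := AvoidsH l ∧ l.sum.2 = 0

def IsLoop (l : List Pt) : Prop :=
  (∀ i ≤ l.length, ¬ OnNegAxis (vert l i)) ∧ l.sum = (0, 0)

def EndsAtAxisMin (l : List Pt) : Prop :=
  l.sum.2 = 0 ∧ ∀ j ≤ l.length, (vert l j).2 = 0 → l.sum.1 ≤ (vert l j).1

def EndsAtStrictAxisMin (l : List Pt) : Prop :=
  l.sum.2 = 0 ∧ ∀ j < l.length, (vert l j).2 = 0 → l.sum.1 < (vert l j).1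

lemma eq_nil_of_endsAtStrictAxisMin_of_isLoop {l₁ m l₂ : List Pt} (h₁ : EndsAtStrictAxisMin l₁)
    (h : EndsAtStrictAxisMin (l₁ ++ m)) (hm : IsLoop (m ++ l₂)) : m = [] := by
  by_contra hne
  have hlt : l₁.length < (l₁ ++ m).length := by
    simpa using List.length_pos_iff.mpr hne
  have hleft := h.2 l₁.length hlt (by rw [vert_append_of_le m le_rfl, vert_length]; exact h₁.1)
  rw [vert_append_of_le m le_rfl, vert_length] at hleft
  apply hm.1 m.length (by simp)
  rw [vert_append_of_le l₂ le_rfl, vert_length]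
  have hy := h.1
  simp only [List.sum_append, Prod.fst_add, Prod.snd_add] at hleft hy
  exact ⟨by linarith [h₁.1], by linarith⟩

lemma endsAtAxisMin_iff (l : List Pt) :
    EndsAtAxisMin l ↔ ∃ l₁ l₂, l = l₁ ++ l₂ ∧ EndsAtStrictAxisMin l₁ ∧ IsLoop l₂ := by
  constructor
  · intro hl
    have hend : ∃ k, vert l k = l.sum := ⟨l.length, vert_length l⟩
    obtain ⟨l₁, l₂, rfl, hk⟩ := exists_eq_append_length_eq l (Nat.find_min' hend (vert_length l))
    have hfirst : ∀ j < l₁.length, vert (l₁ ++ l₂) j ≠ (l₁ ++ l₂).sum := fun j hj =>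
      Nat.find_min hend (hk ▸ hj)
    have hl₁ : l₁.sum = (l₁ ++ l₂).sum := by
      have := Nat.find_spec hend
      rwa [← hk, vert_append_of_le l₂ le_rfl, vert_length] at this
    have hl₂ : l₂.sum = 0 := by simpa using hl₁
    refine ⟨l₁, l₂, rfl, ⟨hl₁ ▸ hl.1, fun j hj hy => ?_⟩, fun j hj hneg => ?_, hl₂⟩
    · have hle := hl.2 j (by simp; omega) (by rwa [vert_append_of_le l₂ hj.le])
      have hne := hfirst j hj
      rw [vert_append_of_le l₂ hj.le, ← hl₁] at hle hne
      refine lt_of_le_of_ne hle fun heq => hne (Prod.ext heq.symm ?_)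
      rw [hy, hl₁, hl.1]
    · have hle := hl.2 (l₁.length + j) (by simp; omega)
      simp only [vert_append_add, Prod.fst_add, Prod.snd_add, ← hl₁, hl₁ ▸ hl.1] at hle
      have := hle (by simp [hneg.1])
      exact absurd hneg.2 (by omega)
  · rintro ⟨l₁, l₂, rfl, h₁, h₂⟩
    have hsum : (l₁ ++ l₂).sum = l₁.sum := by simp [h₂.2]
    refine ⟨hsum ▸ h₁.1, fun j hj hy => ?_⟩
    rw [hsum]
    by_cases hj₁ : j ≤ l₁.length
    · rw [vert_append_of_le l₂ hj₁] at hy ⊢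
      rcases hj₁.lt_or_eq with hlt | rfl
      · exact (h₁.2 j hlt hy).le
      · rw [vert_length]
    · obtain ⟨m, rfl⟩ := Nat.exists_eq_add_of_le (le_of_not_ge hj₁)
      rw [vert_append_add] at hy ⊢
      simp only [Prod.fst_add, Prod.snd_add, h₁.1, zero_add] at hy ⊢
      have := h₂.1 m (by simp at hj; omega)
      simp only [OnNegAxis, hy, true_and, not_lt] at this
      omega

lemma eq_nil_of_endsAtAxisMin_of_isSlitBilateral {l₁ m l₂ : List Pt} (h₁ : EndsAtAxisMin l₁)
    (h : EndsAtAxisMin (l₁ ++ m)) (hm : IsSlitBilateral (m ++ l₂)) : m = [] := by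
  by_contra hne
  have hleft := h.2 l₁.length (by simp)
    (by rw [vert_append_of_le m le_rfl, vert_length]; exact h₁.1)
  rw [vert_append_of_le m le_rfl, vert_length] at hleft
  apply hm.1 m.length (List.length_pos_iff.mpr hne) (by simp)
  rw [vert_append_of_le l₂ le_rfl, vert_length]
  have hy := h.1
  simp only [List.sum_append, Prod.fst_add, Prod.snd_add] at hleft hy
  exact ⟨by linarith [h₁.1], by linarith⟩

lemma exists_last_axisMin (l : List Pt) : ∃ k ≤ l.length, (vert l k).2 = 0 ∧
    (∀ j ≤ l.length, (vert l j).2 = 0 → (vert l k).1 ≤ (vert l j).1) ∧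
    ∀ j ≤ l.length, k < j → (vert l j).2 = 0 → (vert l k).1 < (vert l j).1 := by
  obtain ⟨k, hk, hmax⟩ := ((Finset.range (l.length + 1)).filter fun j => (vert l j).2 = 0)
    |>.exists_max_image (fun j => toLex (-(vert l j).1, j)) ⟨0, by simp [vert_zero]⟩
  simp only [Finset.mem_filter, Finset.mem_range, and_imp, Prod.Lex.toLex_le_toLex] at hk hmax
  refine ⟨k, by omega, hk.2, fun j hj hy => ?_, fun j hj hkj hy => ?_⟩ <;>
    have := hmax j (by omega) hy <;> omega

lemma sum_snd_eq_zero_iff (l : List Pt) :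
    l.sum.2 = 0 ↔ ∃ l₁ l₂, l = l₁ ++ l₂ ∧ EndsAtAxisMin l₁ ∧ IsSlitBilateral l₂ := by
  constructor
  · intro hl
    obtain ⟨k, hk, hy, hmin, hlast⟩ := exists_last_axisMin l
    obtain ⟨l₁, l₂, rfl, rfl⟩ := exists_eq_append_length_eq l hk
    rw [vert_append_of_le l₂ le_rfl, vert_length] at hy hmin hlast
    refine ⟨l₁, l₂, rfl, ⟨hy, fun j hj hyj => ?_⟩, ⟨fun j hj₁ hj₂ hH => ?_, ?_⟩⟩
    · rw [← vert_append_of_le l₂ hj] at hyj ⊢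
      exact hmin j (by simp; omega) hyj
    · have := hlast (l₁.length + j) (by simp; omega) (by omega)
        (by simp [vert_append_add, hy, hH.1])
      rw [vert_append_add, Prod.fst_add] at this
      exact absurd hH.2 (by omega)
    · simpa [hy] using hl
  · rintro ⟨l₁, l₂, rfl, h₁, h₂⟩
    simp [h₁.1, h₂.2]

def walks (S : Finset Pt) : ℕ → Finset (List Pt)
  | 0 => {[]}
  | n + 1 => (S ×ˢ walks S n).image fun p => p.1 :: p.2

lemma mem_walks {S : Finset Pt} {n : ℕ} {l : List Pt} :
    l ∈ walks S n ↔ l.length = n ∧ StepsIn S l := by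
  induction n generalizing l with
  | zero => cases l <;> simp [walks, StepsIn]
  | succ n ih =>
    cases l with
    | nil => simp [walks]
    | cons s l => simp [walks, ih, StepsIn, and_comm, and_left_comm]

lemma stepsIn_append {S : Finset Pt} {l₁ l₂ : List Pt} :
    StepsIn S (l₁ ++ l₂) ↔ StepsIn S l₁ ∧ StepsIn S l₂ := by
  simp [StepsIn, or_imp, forall_and]

noncomputable def walkGF (S : Finset Pt) (P : List Pt → Prop) : PowerSeries L1 :=
  PowerSeries.mk fun n => ∑ l ∈ (walks S n).filter P, AddMonoidAlgebra.single l.sum.1 1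

lemma coeff_coeff_walkGF (S : Finset Pt) (P : List Pt → Prop) (n : ℕ) (i : ℤ) :
    (coeff n (walkGF S P)).coeff i =
      Set.ncard {l : List Pt | l.length = n ∧ StepsIn S l ∧ P l ∧ l.sum.1 = i} := by
  rw [walkGF, coeff_mk, AddMonoidAlgebra.coeff_sum, Finset.sum_apply']
  simp only [AddMonoidAlgebra.coeff_single, Finsupp.single_apply]
  rw [Finset.sum_boole, ← Set.ncard_coe_finset]
  congr
  ext l
  simp [mem_walks, and_assoc]

lemma eq_walkGF {S : Finset Pt} {P : List Pt → Prop} {F : PowerSeries L1}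
    (hF : ∀ n i, (coeff n F).coeff i =
      Set.ncard {l : List Pt | l.length = n ∧ StepsIn S l ∧ P l ∧ l.sum.1 = i}) :
    F = walkGF S P := by
  ext n : 1
  apply AddMonoidAlgebra.ext
  ext i
  rw [hF, coeff_coeff_walkGF]

theorem walkGF_mul {S : Finset Pt} {P Q R : List Pt → Prop}
    (hR : ∀ l, R l ↔ ∃ l₁ l₂, l = l₁ ++ l₂ ∧ P l₁ ∧ Q l₂)
    (hPQ : ∀ l₁ m l₂, P l₁ → P (l₁ ++ m) → Q (m ++ l₂) → m = []) :
    walkGF S P * walkGF S Q = walkGF S R := by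
  ext n : 1
  rw [coeff_mul]
  simp only [walkGF, coeff_mk, Finset.sum_mul_sum, AddMonoidAlgebra.single_mul_single, mul_one]
  simp_rw [← Finset.sum_product']
  rw [Finset.sum_sigma']
  have hcancel : ∀ {x₁ y₁ x₂ y₂}, P x₁ → Q y₁ → P x₂ → Q y₂ → x₁ ++ y₁ = x₂ ++ y₂ →
      x₁ = x₂ ∧ y₁ = y₂ := by
    intro x₁ y₁ x₂ y₂ hx₁ hy₁ hx₂ hy₂ h
    -- two factorisations of one walk differ by a piece `m` moved from one factor to the other
    rcases List.append_eq_append_iff.mp h with ⟨m, rfl, rfl⟩ | ⟨m, rfl, rfl⟩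
    · simp [hPQ x₁ m y₂ hx₁ hx₂ hy₁]
    · simp [hPQ x₂ m y₁ hx₂ hx₁ hy₂]
  refine Finset.sum_bij (fun x _ => x.2.1 ++ x.2.2) ?_ ?_ ?_ ?_ <;>
    simp only [Finset.mem_sigma, Finset.mem_product, Finset.mem_filter, mem_walks,
      Finset.HasAntidiagonal.mem_antidiagonal, Sigma.forall, Prod.forall]
  · rintro a b x y ⟨rfl, ⟨⟨rfl, hx⟩, hPx⟩, ⟨rfl, hy⟩, hQy⟩
    exact ⟨⟨by simp, stepsIn_append.mpr ⟨hx, hy⟩⟩, (hR _).mpr ⟨x, y, rfl, hPx, hQy⟩⟩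
  · rintro a b x₁ y₁ ⟨rfl, ⟨⟨rfl, -⟩, hx₁⟩, ⟨rfl, -⟩, hy₁⟩
      a' b' x₂ y₂ ⟨-, ⟨⟨rfl, -⟩, hx₂⟩, ⟨rfl, -⟩, hy₂⟩ h
    obtain ⟨rfl, rfl⟩ := hcancel hx₁ hy₁ hx₂ hy₂ h
    rfl
  · rintro l ⟨⟨rfl, hl⟩, hRl⟩
    obtain ⟨x, y, rfl, hx, hy⟩ := (hR l).mp hRl
    exact ⟨⟨(x.length, y.length), x, y⟩, ⟨by simp, ⟨⟨rfl, (stepsIn_append.mp hl).1⟩, hx⟩,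
      ⟨rfl, (stepsIn_append.mp hl).2⟩, hy⟩, rfl⟩
  · intro _ _ x y _
    rw [List.sum_append, Prod.fst_add]

lemma slitCount_eq_ncard (T : Finset Pt) (n : ℕ) (i : ℤ) :
    slitCount T n (i, 0) =
      {l : List Pt | l.length = n ∧ StepsIn T l ∧ IsSlitBilateral l ∧ l.sum.1 = i}.ncard := by
  rw [slitCount]
  congr 1
  ext l
  simp only [Set.mem_ofPred_eq, IsSlitBilateral, Prod.ext_iff]
  tauto

lemma walkCount_eq_ncard (S : Finset Pt) (n : ℕ) (i : ℤ) :
    walkCount S n (i, 0) =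
      {l : List Pt | l.length = n ∧ StepsIn S l ∧ l.sum.2 = 0 ∧ l.sum.1 = i}.ncard := by
  rw [walkCount]
  congr 1
  ext l
  simp only [Set.mem_ofPred_eq, Prod.ext_iff]
  tauto

lemma slitCount_revSteps (S : Finset Pt) (n : ℕ) (i : ℤ) :
    slitCount (revSteps S) n (-i, 0) =
      {l : List Pt | l.length = n ∧ StepsIn S l ∧ EndsAtStrictAxisMin l ∧ l.sum.1 = i}.ncard := by
  rw [slitCount, ← Set.ncard_image_of_injective _ reverseWalk_involutive.injective,
    reverseWalk_involutive.image_eq_preimage_symm]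
  congr 1
  ext l
  simp only [Set.mem_preimage, Set.mem_ofPred_eq, length_reverseWalk, stepsIn_revSteps_reverseWalk,
    sum_reverseWalk, EndsAtStrictAxisMin, Prod.ext_iff, Prod.fst_neg, Prod.snd_neg, neg_inj,
    neg_eq_zero]
  constructor
  · rintro ⟨hn, hS, hH, hi, hy⟩
    exact ⟨hn, hS, ⟨hy, (avoidsH_reverseWalk_iff hy).mp hH⟩, hi⟩
  · rintro ⟨hn, hS, ⟨hy, hmin⟩, hi⟩
    exact ⟨hn, hS, (avoidsH_reverseWalk_iff hy).mpr hmin, hi, hy⟩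

lemma ncard_isLoop (S : Finset Pt) (n : ℕ) (i : ℤ) :
    {l : List Pt | l.length = n ∧ StepsIn S l ∧ IsLoop l ∧ l.sum.1 = i}.ncard =
      if 0 = i then loopCount S n else 0 := by
  split_ifs with hi
  · subst hi
    rw [loopCount]
    congr 1
    ext l
    simp only [Set.mem_ofPred_eq, IsLoop]
    constructor
    · rintro ⟨hn, hS, hl, -⟩
      exact ⟨hn, hS, hl⟩
    · rintro ⟨hn, hS, hl⟩
      exact ⟨hn, hS, hl, by rw [hl.2]⟩
  · convert Set.ncard_empty (List Pt)
    ext l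
    simp only [Set.mem_ofPred_eq, IsLoop, Set.mem_empty_iff_false, iff_false]
    rintro ⟨-, -, ⟨-, hl⟩, rfl⟩
    simp [hl] at hi

/-- `S̄₀(x⁻¹;t) · L(t) · S₀(x;t) = B(x;t)`, where `S₀` counts bilateral
walks on the slit plane with steps in `S`, `S̄₀` the same with reversed steps (the
substitution `x ↦ x⁻¹` being expressed on coefficients), `L` counts loops and `B`
counts bilateral walks. -/
theorem statement6 (S : Finset Pt)
    (S0 Sb B : PowerSeries L1) (L : PowerSeries ℚ)
    (hS0 : ∀ (n : ℕ) (i : ℤ),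
      (PowerSeries.coeff (R := L1) n S0).coeff i = (slitCount S n (i, 0) : ℚ))
    (hSb : ∀ (n : ℕ) (i : ℤ),
      (PowerSeries.coeff (R := L1) n Sb).coeff i = (slitCount (revSteps S) n (-i, 0) : ℚ))
    (hL : ∀ n : ℕ, PowerSeries.coeff (R := ℚ) n L = (loopCount S n : ℚ))
    (hB : ∀ (n : ℕ) (i : ℤ),
      (PowerSeries.coeff (R := L1) n B).coeff i = (walkCount S n (i, 0) : ℚ)) :
    Sb * PowerSeries.map (algebraMap ℚ L1) L * S0 = B := by
  have hSb' : Sb = walkGF S EndsAtStrictAxisMin :=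
    eq_walkGF fun n i => by rw [hSb, slitCount_revSteps]
  have hL' : PowerSeries.map (algebraMap ℚ L1) L = walkGF S IsLoop :=
    eq_walkGF fun n i => by
      rw [coeff_map, hL, AddMonoidAlgebra.coe_algebraMap, Function.comp_apply,
        AddMonoidAlgebra.coeff_single, Finsupp.single_apply, ncard_isLoop]
      split_ifs <;> simp
  have hS0' : S0 = walkGF S IsSlitBilateral :=
    eq_walkGF fun n i => by rw [hS0, slitCount_eq_ncard]
  have hB' : B = walkGF S fun l => l.sum.2 = 0 :=
    eq_walkGF fun n i => by rw [hB, walkCount_eq_ncard]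
  rw [hSb', hL', hS0', hB',
    walkGF_mul endsAtAxisMin_iff fun _ _ _ => eq_nil_of_endsAtStrictAxisMin_of_isLoop,
    walkGF_mul sum_snd_eq_zero_iff fun _ _ _ => eq_nil_of_endsAtAxisMin_of_isSlitBilateral]

end SlitPlane
end

section
/- Let B(x;t) be a formal power series in t with coefficients in the Laurent polynomial ring R[x,x^{-1}] over the reals, with constant term B(x;0) = 1. Then there exists a unique triple (B_0(t), B_+(x;t), B_-(x^{-1};t)) of formal power series in t such that: B(x;t) = B_0(t) * B_+(x;t) * B_-(x^{-1};t); the coefficients of B_0 lie in R; the coefficients of B_+ lie in R[x]; the coefficients of B_- lie in R[x^{-1}]; and B_0(0) = B_+(x;0) = B_-(x^{-1};0) = B_+(0;t) = B_-(0;t) = 1 (i.e., each factor has constant term 1 as a series in t, and setting x = 0, respectively x^{-1} = 0, in B_+, respectively B_-, gives the constant series 1). -/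
open scoped Classical

namespace SlitPlane

/-- The Laurent polynomial ring `ℝ[x, x⁻¹]`: monomial `i` stands for `x^i`. -/
abbrev E1 := AddMonoidAlgebra ℝ ℤ

/-- `(B₀, B₊, B₋)` is a canonical factorization of `B`:
`B = B₀ B₊ B₋`, the coefficients of `B₊` lie in `ℝ[x]`, those of `B₋` in `ℝ[x⁻¹]`,
`B₀(0) = 1`, `B₊(x;0) = B₋(x⁻¹;0) = 1`, and `B₊(0;t) = B₋(0;t) = 1` (i.e. the
constant-in-`x` part of each coefficient of `B₊` and `B₋` vanishes in positive
degrees in `t`). -/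
def IsCanonicalFactorization (B : PowerSeries E1)
    (B0 : PowerSeries ℝ) (Bp Bm : PowerSeries E1) : Prop :=
  B = PowerSeries.map (algebraMap ℝ E1) B0 * Bp * Bm ∧
  (∀ (n : ℕ) (i : ℤ), i < 0 → (PowerSeries.coeff n Bp).coeff i = 0) ∧
  (∀ (n : ℕ) (i : ℤ), 0 < i → (PowerSeries.coeff n Bm).coeff i = 0) ∧
  PowerSeries.coeff 0 B0 = 1 ∧
  PowerSeries.coeff 0 Bp = 1 ∧
  PowerSeries.coeff 0 Bm = 1 ∧
  (∀ n : ℕ, 1 ≤ n → (PowerSeries.coeff n Bp).coeff 0 = 0) ∧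
  (∀ n : ℕ, 1 ≤ n → (PowerSeries.coeff n Bm).coeff 0 = 0)

end SlitPlane

/-!
Compare coefficients of `tⁿ`. When every factor has constant term `1`, the `tⁿ`-coefficient of a
product is the sum of the `tⁿ`-coefficients of the factors plus a term involving only lower
coefficients. So in each degree the new coefficients of `B₀`, `B₊`, `B₋` must add up to a known
Laurent polynomial; they lie in `ℝ`, `x ℝ[x]` and `x⁻¹ ℝ[x⁻¹]`, and `ℝ[x, x⁻¹]` is the direct
sum of these three subspaces, so they exist and are unique.

We split in two steps: exponents `≥ 0` against exponents `< 0` gives `B = (B₀ B₊) B₋`, then the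
constant term against the rest factors `B₀ B₊`. That `B₊` has coefficients in `ℝ[x]` follows from
`B₊ = B₀⁻¹ (B₀ B₊)`, since `B₀` has real coefficients.
-/

open PowerSeries

namespace PowerSeries

variable {A : Type*} [Ring A]

theorem coeff_zero_mul (P Q : A⟦X⟧) : coeff 0 (P * Q) = coeff 0 P * coeff 0 Q := by
  simp only [coeff_zero_eq_constantCoeff_apply, map_mul]

theorem coeff_mul_eq_add_add_coeff_trunc_mul_trunc {P Q : A⟦X⟧} (hP : coeff 0 P = 1)
    (hQ : coeff 0 Q = 1) {n : ℕ} (hn : n ≠ 0) :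
    coeff n (P * Q) =
      coeff n P + coeff n Q + coeff n ((trunc n P : A⟦X⟧) * (trunc n Q : A⟦X⟧)) := by
  simp only [coeff_mul, Polynomial.coeff_coe, coeff_trunc]
  rw [← sub_eq_iff_eq_add, ← Finset.sum_sub_distrib, Finset.sum_eq_add_of_mem (n, 0) (0, n)
    (by simp) (by simp) (by simp [hn])]
  · simp [hP, hQ, Nat.pos_of_ne_zero hn]
  · rintro ⟨i, j⟩ hij hne
    rw [Finset.HasAntidiagonal.mem_antidiagonal] at hij
    have hi : i < n := by grind
    have hj : j < n := by grind
    simp [hi, hj]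

def IsSplitFactorization (π : A →+ A) (B P Q : A⟦X⟧) : Prop :=
  B = P * Q ∧ coeff 0 P = 1 ∧ coeff 0 Q = 1 ∧
    (∀ n, 1 ≤ n → π (coeff n P) = coeff n P) ∧ (∀ n, 1 ≤ n → π (coeff n Q) = 0)

variable {π : A →+ A}

theorem IsSplitFactorization.unique {B P Q P' Q' : A⟦X⟧} (h : IsSplitFactorization π B P Q)
    (h' : IsSplitFactorization π B P' Q') : P = P' ∧ Q = Q' := by
  obtain ⟨hB, hP0, hQ0, hP, hQ⟩ := h
  obtain ⟨hB', hP0', hQ0', hP', hQ'⟩ := h'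
  have htrunc : ∀ n, trunc n P = trunc n P' ∧ trunc n Q = trunc n Q' := by
    intro n
    induction n with
    | zero => simp
    | succ n ih =>
      simp only [trunc_succ]
      suffices coeff n P = coeff n P' ∧ coeff n Q = coeff n Q' by
        rw [ih.1, ih.2, this.1, this.2]; exact ⟨rfl, rfl⟩
      rcases Nat.eq_zero_or_pos n with rfl | hn
      · exact ⟨hP0.trans hP0'.symm, hQ0.trans hQ0'.symm⟩
      have hsum : coeff n P + coeff n Q = coeff n P' + coeff n Q' := by
        have := congrArg (coeff n) (hB.symm.trans hB')
        rwa [coeff_mul_eq_add_add_coeff_trunc_mul_trunc hP0 hQ0 hn.ne',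
          coeff_mul_eq_add_add_coeff_trunc_mul_trunc hP0' hQ0' hn.ne', ih.1, ih.2,
          add_left_inj] at this
      have hPn : coeff n P = coeff n P' := by
        simpa [hP n hn, hQ n hn, hP' n hn, hQ' n hn] using congrArg π hsum
      exact ⟨hPn, by rwa [hPn, add_right_inj] at hsum⟩
  constructor <;> ext n
  · simpa [coeff_trunc] using congrArg (Polynomial.coeff · n) (htrunc (n + 1)).1
  · simpa [coeff_trunc] using congrArg (Polynomial.coeff · n) (htrunc (n + 1)).2

variable (π) in
noncomputable def splitCoeff (B : A⟦X⟧) : ℕ → A × A :=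
  -- padding the values not yet defined with `0` is harmless, only `trunc n` of them is used
  Nat.strongRec fun n c =>
    if n = 0 then (1, 1) else
      let a := coeff n B - coeff n
        ((trunc n (mk fun m => if h : m < n then (c m h).1 else 0) : A⟦X⟧) *
          (trunc n (mk fun m => if h : m < n then (c m h).2 else 0) : A⟦X⟧))
      (π a, a - π a)

theorem splitCoeff_zero (B : A⟦X⟧) : splitCoeff π B 0 = (1, 1) := by
  rw [splitCoeff, Nat.strongRec_eq, if_pos rfl]

theorem splitCoeff_of_ne_zero (B : A⟦X⟧) {n : ℕ} (hn : n ≠ 0) :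
    splitCoeff π B n =
      let a := coeff n B - coeff n
        ((trunc n (mk fun m => (splitCoeff π B m).1) : A⟦X⟧) *
          (trunc n (mk fun m => (splitCoeff π B m).2) : A⟦X⟧))
      (π a, a - π a) := by
  rw [splitCoeff, Nat.strongRec_eq, if_neg hn]
  have (f : ℕ → A) : trunc n (mk fun m => if m < n then f m else 0) = trunc n (mk f) := by
    ext m; simp +contextual [coeff_trunc]
  simp only [dite_eq_ite, this]
  rfl

theorem exists_isSplitFactorization (hπ : ∀ a, π (π a) = π a) {B : A⟦X⟧}
    (hB : coeff 0 B = 1) : ∃ P Q, IsSplitFactorization π B P Q := by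
  set P := mk fun n => (splitCoeff π B n).1
  set Q := mk fun n => (splitCoeff π B n).2
  have hP0 : coeff 0 P = 1 := by simp [P, splitCoeff_zero]
  have hQ0 : coeff 0 Q = 1 := by simp [Q, splitCoeff_zero]
  refine ⟨P, Q, ?_, hP0, hQ0, fun n hn => ?_, fun n hn => ?_⟩
  · ext n
    rcases Nat.eq_zero_or_pos n with rfl | hn
    · rw [hB, coeff_zero_mul, hP0, hQ0, mul_one]
    rw [coeff_mul_eq_add_add_coeff_trunc_mul_trunc hP0 hQ0 hn.ne']
    simp [P, Q, splitCoeff_of_ne_zero B hn.ne']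
  · simp [P, splitCoeff_of_ne_zero B (Nat.one_le_iff_ne_zero.1 hn), hπ]
  · simp [Q, splitCoeff_of_ne_zero B (Nat.one_le_iff_ne_zero.1 hn), hπ]

theorem existsUnique_isSplitFactorization (hπ : ∀ a, π (π a) = π a) {B : A⟦X⟧}
    (hB : coeff 0 B = 1) : ∃! PQ : A⟦X⟧ × A⟦X⟧, IsSplitFactorization π B PQ.1 PQ.2 := by
  obtain ⟨P, Q, h⟩ := exists_isSplitFactorization hπ hB
  exact ⟨(P, Q), h, fun PQ h' => Prod.ext (h'.unique h).1 (h'.unique h).2⟩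

end PowerSeries

namespace SlitPlane

noncomputable def nonnegPart : E1 →+ E1 where
  toFun f := AddMonoidAlgebra.ofCoeff (f.coeff.filter (0 ≤ ·))
  map_zero' := by simp [Finsupp.filter_zero]
  map_add' f g := by simp [AddMonoidAlgebra.coeff_add, Finsupp.filter_add]

@[simp] lemma coeff_nonnegPart (f : E1) (i : ℤ) :
    (nonnegPart f).coeff i = if 0 ≤ i then f.coeff i else 0 := by
  simp [nonnegPart, Finsupp.filter_apply]

lemma nonnegPart_nonnegPart (f : E1) : nonnegPart (nonnegPart f) = nonnegPart f := by
  ext i; simp +contextual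

lemma nonnegPart_eq_self_iff {f : E1} : nonnegPart f = f ↔ ∀ i < 0, f.coeff i = 0 := by
  simp only [LaurentPolynomial.ext_iff, coeff_nonnegPart]
  exact forall_congr' fun i => by split_ifs <;> grind

lemma nonnegPart_eq_zero_iff {f : E1} : nonnegPart f = 0 ↔ ∀ i, 0 ≤ i → f.coeff i = 0 := by
  simp only [LaurentPolynomial.ext_iff, coeff_nonnegPart, AddMonoidAlgebra.coeff_zero,
    Finsupp.coe_zero, Pi.zero_apply]
  exact forall_congr' fun i => by split_ifs <;> grind

lemma coeff_algebraMap (r : ℝ) (i : ℤ) :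
    (algebraMap ℝ E1 r).coeff i = if i = 0 then r else 0 := by
  simp [← LaurentPolynomial.C_eq_algebraMap]

lemma coeff_one (i : ℤ) : (1 : E1).coeff i = if i = 0 then 1 else 0 := by
  rw [← map_one (algebraMap ℝ E1), coeff_algebraMap]

noncomputable def constPart : E1 →+ E1 where
  toFun f := algebraMap ℝ E1 (f.coeff 0)
  map_zero' := by simp
  map_add' f g := by simp [AddMonoidAlgebra.coeff_add]

lemma constPart_apply (f : E1) : constPart f = algebraMap ℝ E1 (f.coeff 0) := rfl

lemma constPart_constPart (f : E1) : constPart (constPart f) = constPart f := by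
  simp [constPart_apply]

lemma constPart_eq_zero_iff {f : E1} : constPart f = 0 ↔ f.coeff 0 = 0 := by
  rw [constPart_apply, map_eq_zero_iff _ (algebraMap ℝ E1).injective]

lemma coeff_coeff_map_algebraMap_mul_eq_zero {i : ℤ} {F : E1⟦X⟧}
    (hF : ∀ n, (coeff n F).coeff i = 0) (c : ℝ⟦X⟧) (n : ℕ) :
    (coeff n (map (algebraMap ℝ E1) c * F)).coeff i = 0 := by
  simp [coeff_mul, AddMonoidAlgebra.coeff_sum, Finset.sum_apply',
    ← LaurentPolynomial.smul_eq_C_mul, hF]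

lemma exists_map_algebraMap_eq {C : E1⟦X⟧} (h0 : coeff 0 C = 1)
    (h : ∀ n, 1 ≤ n → constPart (coeff n C) = coeff n C) :
    ∃ c : ℝ⟦X⟧, map (algebraMap ℝ E1) c = C := by
  refine ⟨mk fun n => (coeff n C).coeff 0, ext fun n => ?_⟩
  rcases n with _ | n
  · simp [h0]
  · simpa [constPart_apply] using h (n + 1) le_add_self

lemma coeff_zero_map_algebraMap_eq_one_iff {c : ℝ⟦X⟧} :
    coeff 0 (map (algebraMap ℝ E1) c) = 1 ↔ coeff 0 c = 1 := by
  rw [coeff_map, ← map_one (algebraMap ℝ E1), (algebraMap ℝ E1).injective.eq_iff]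

theorem isCanonicalFactorization_iff {B : E1⟦X⟧} {B0 : ℝ⟦X⟧} {Bp Bm : E1⟦X⟧} :
    IsCanonicalFactorization B B0 Bp Bm ↔
      IsSplitFactorization nonnegPart B (map (algebraMap ℝ E1) B0 * Bp) Bm ∧
      IsSplitFactorization constPart (map (algebraMap ℝ E1) B0 * Bp)
        (map (algebraMap ℝ E1) B0) Bp := by
  constructor
  · rintro ⟨hB, hBp, hBm, hB00, hBp0, hBm0, hBpc, hBmc⟩
    have hC0 := coeff_zero_map_algebraMap_eq_one_iff.2 hB00
    refine ⟨⟨hB, ?_, hBm0, fun n _ => ?_, fun n hn => ?_⟩,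
      ⟨rfl, hC0, hBp0, fun n _ => ?_, fun n hn => constPart_eq_zero_iff.2 (hBpc n hn)⟩⟩
    · rw [coeff_zero_mul, hC0, hBp0, one_mul]
    · exact nonnegPart_eq_self_iff.2 fun i hi =>
        coeff_coeff_map_algebraMap_mul_eq_zero (fun k => hBp k i hi) B0 n
    · exact nonnegPart_eq_zero_iff.2 fun i hi =>
        hi.eq_or_lt.elim (fun h => h ▸ hBmc n hn) (hBm n i)
    · simp [constPart_apply]
  · rintro ⟨⟨hB, hP0, hBm0, hP, hBm⟩, ⟨-, hC0, hBp0, -, hBp⟩⟩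
    have hB00 := coeff_zero_map_algebraMap_eq_one_iff.1 hC0
    refine ⟨hB, fun n i hi => ?_, fun n i hi => ?_, hB00, hBp0, hBm0,
      fun n hn => constPart_eq_zero_iff.1 (hBp n hn),
      fun n hn => nonnegPart_eq_zero_iff.1 (hBm n hn) 0 le_rfl⟩
    · have hB0 : constantCoeff B0 ≠ 0 := by simp [← coeff_zero_eq_constantCoeff_apply, hB00]
      have hinv : map (algebraMap ℝ E1) B0⁻¹ * (map (algebraMap ℝ E1) B0 * Bp) = Bp := by
        rw [← mul_assoc, ← map_mul, PowerSeries.inv_mul_cancel _ hB0, map_one, one_mul]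
      rw [← hinv]
      refine coeff_coeff_map_algebraMap_mul_eq_zero (fun k => ?_) _ n
      rcases k with _ | k
      · rw [hP0, coeff_one, if_neg hi.ne]
      · exact nonnegPart_eq_self_iff.1 (hP (k + 1) le_add_self) i hi
    · rcases n with _ | n
      · rw [hBm0, coeff_one, if_neg hi.ne']
      · exact nonnegPart_eq_zero_iff.1 (hBm (n + 1) le_add_self) i hi.le

/-- the factorization lemma: any `B ∈ ℝ[x,x⁻¹][[t]]` with `B(x;0) = 1`
admits a unique canonical factorization `B = B₀ B₊ B₋`. -/
theorem statement8 (B : PowerSeries E1)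
    (hB : PowerSeries.coeff 0 B = 1) :
    ∃! T : PowerSeries ℝ × PowerSeries E1 × PowerSeries E1,
      IsCanonicalFactorization B T.1 T.2.1 T.2.2 := by
  obtain ⟨⟨P, Bm⟩, hPBm, huniq⟩ :=
    existsUnique_isSplitFactorization nonnegPart_nonnegPart hB
  obtain ⟨⟨C, Bp⟩, hCBp, huniq'⟩ :=
    existsUnique_isSplitFactorization constPart_constPart hPBm.2.1
  obtain ⟨B0, rfl⟩ := exists_map_algebraMap_eq hCBp.2.1 hCBp.2.2.2.1
  refine ⟨(B0, Bp, Bm), isCanonicalFactorization_iff.2 ⟨hCBp.1 ▸ hPBm, hCBp.1 ▸ hCBp⟩, ?_⟩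
  rintro ⟨B0', Bp', Bm'⟩ h
  obtain ⟨h, h'⟩ := isCanonicalFactorization_iff.1 h
  obtain ⟨hP, hBm⟩ := Prod.mk_inj.1 (huniq (_, Bm') h)
  rw [hP] at h'
  obtain ⟨hC, hBp⟩ := Prod.mk_inj.1 (huniq' (_, Bp') h')
  exact Prod.ext (map_injective _ (algebraMap ℝ E1).injective hC) (Prod.ext hBp hBm)

end SlitPlane
end
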